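/- arXiv:2504.21812 — 5 statements merged into one kernel-verified Lean document; each statement's English description precedes it below -/
import Mathlib

section
/- The variance of the truncated harmonic mean estimator based on M i.i.d. posterior draws with truncation set A satisfies Var[Ẑ^{-1}] = (Z^{-2}/M) · ( ∫_A (1/V(A)^2) / p(θ) dθ − 1 ), where p is the posterior density, provided A is measurable with 0 < V(A) < ∞ and A is contained in the posterior support. -/
/-!
The estimator is the sample mean of the i.i.d. nonnegative weights
`w θ = 1_A(θ) / (V(A) π(θ) L(θ))`. Against the posterior density `p = π L / Z` the weight has
mean `∫_A 1 / (Z V(A)) = Z⁻¹` and second moment `Z⁻² ∫_A (1 / V(A)²) / p`, and independence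
gives `E[(∑ w_t)²] = M E[w²] + M (M - 1) E[w]²`, so the mean of `M` weights has variance
`(E[w²] - E[w]²) / M`. All of this is done in `ℝ≥0∞`, where `E[w²]` may be infinite; Jensen's
inequality `E[w]² ≤ E[w²]` makes the truncated subtraction in `evariance_def'` harmless.
-/

open MeasureTheory ProbabilityTheory
open scoped ENNReal

theorem ofReal_one_div_card_mul_sum {ι : Type*} [Fintype ι] [Nonempty ι] {x : ι → ℝ}
    (hx : ∀ i, 0 ≤ x i) :
    ENNReal.ofReal ((1 / (Fintype.card ι : ℝ)) * ∑ i, x i)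
      = (Fintype.card ι : ℝ≥0∞)⁻¹ * ∑ i, ENNReal.ofReal (x i) := by
  rw [ENNReal.ofReal_mul (by positivity), ENNReal.ofReal_sum_of_nonneg fun i _ => hx i,
    one_div, ENNReal.ofReal_inv_of_pos (by positivity), ENNReal.ofReal_natCast]

section SecondMoment

variable {Ω : Type*} [MeasurableSpace Ω] {μ : Measure Ω}

theorem sq_lintegral_le_lintegral_sq [IsProbabilityMeasure μ] {f : Ω → ℝ≥0∞}
    (hf : AEMeasurable f μ) : (∫⁻ ω, f ω ∂μ) ^ 2 ≤ ∫⁻ ω, f ω ^ 2 ∂μ := by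
  have holder := ENNReal.lintegral_mul_le_Lp_mul_Lq μ Real.HolderConjugate.two_two hf
    (aemeasurable_const (b := (1 : ℝ≥0∞)))
  simp only [Pi.mul_apply, mul_one, one_pow, ENNReal.one_rpow, lintegral_const, measure_univ,
    ENNReal.rpow_two] at holder
  calc (∫⁻ ω, f ω ∂μ) ^ 2 ≤ ((∫⁻ ω, f ω ^ 2 ∂μ) ^ (1 / 2 : ℝ)) ^ 2 := by gcongr
    _ = ∫⁻ ω, f ω ^ 2 ∂μ := by
      rw [← ENNReal.rpow_natCast, ← ENNReal.rpow_mul]; norm_num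

-- `E[(∑ Y)²] = n s + n (n - 1) m²`, with `n m²` moved to the left so that no subtraction occurs.
theorem lintegral_sq_sum_add_of_iIndepFun {ι : Type*} [Fintype ι] {Y : ι → Ω → ℝ≥0∞}
    (hY : ∀ i, Measurable (Y i)) (hindep : iIndepFun Y μ) {m s : ℝ≥0∞}
    (hm : ∀ i, ∫⁻ ω, Y i ω ∂μ = m) (hs : ∀ i, ∫⁻ ω, Y i ω ^ 2 ∂μ = s) :
    ∫⁻ ω, (∑ i, Y i ω) ^ 2 ∂μ + Fintype.card ι * m ^ 2
      = Fintype.card ι * s + (Fintype.card ι * m) ^ 2 := by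
  classical
  have hprod : ∀ i j, ∫⁻ ω, Y i ω * Y j ω ∂μ = if i = j then s else m ^ 2 := by
    intro i j
    split_ifs with hij
    · subst hij; simp_rw [← sq]; exact hs i
    · have hsplit := lintegral_mul_eq_lintegral_mul_lintegral_of_indepFun (hY i) (hY j)
        (hindep.indepFun hij)
      rw [Pi.mul_def] at hsplit
      rw [hsplit, hm, hm, sq]
  have hrow : ∀ i, ∑ j, ∫⁻ ω, Y i ω * Y j ω ∂μ + m ^ 2 = s + ∑ _j : ι, m ^ 2 := by
    intro i
    rw [Finset.sum_congr rfl fun j _ => hprod i j,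
      ← Finset.add_sum_erase _ _ (Finset.mem_univ i),
      ← Finset.add_sum_erase _ (fun _ => m ^ 2) (Finset.mem_univ i), if_pos rfl,
      Finset.sum_congr rfl fun j hj => if_neg (Finset.ne_of_mem_erase hj).symm]
    ring
  calc ∫⁻ ω, (∑ i, Y i ω) ^ 2 ∂μ + Fintype.card ι * m ^ 2
      = ∑ i, (∑ j, ∫⁻ ω, Y i ω * Y j ω ∂μ + m ^ 2) := by
        simp_rw [sq, Finset.sum_mul_sum]
        rw [lintegral_finsetSum (f := fun i ω => ∑ j, Y i ω * Y j ω) _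
          fun i _ => Finset.measurable_sum _ fun j _ => (hY i).mul (hY j)]
        simp_rw [lintegral_finsetSum (f := fun j ω => Y _ ω * Y j ω) _
          fun j _ => (hY _).mul (hY j)]
        simp [Finset.sum_add_distrib]
    _ = Fintype.card ι * s + (Fintype.card ι * m) ^ 2 := by
        simp_rw [hrow]; simp; ring

theorem lintegral_sq_average_add_of_iIndepFun {ι : Type*} [Fintype ι] [Nonempty ι]
    {Y : ι → Ω → ℝ≥0∞} (hY : ∀ i, Measurable (Y i)) (hindep : iIndepFun Y μ) {m s : ℝ≥0∞}
    (hm : ∀ i, ∫⁻ ω, Y i ω ∂μ = m) (hs : ∀ i, ∫⁻ ω, Y i ω ^ 2 ∂μ = s) :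
    ∫⁻ ω, ((Fintype.card ι : ℝ≥0∞)⁻¹ * ∑ i, Y i ω) ^ 2 ∂μ + m ^ 2 / Fintype.card ι
      = s / Fintype.card ι + m ^ 2 := by
  have hsum := lintegral_sq_sum_add_of_iIndepFun hY hindep hm hs
  have hn0 : (Fintype.card ι : ℝ≥0∞) ≠ 0 := by simp
  have hntop : (Fintype.card ι : ℝ≥0∞) ≠ ⊤ := ENNReal.natCast_ne_top _
  generalize (Fintype.card ι : ℝ≥0∞) = n at hsum hn0 hntop ⊢
  have hcancel : n⁻¹ ^ 2 * n = n⁻¹ := by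
    rw [sq, mul_assoc, ENNReal.inv_mul_cancel hn0 hntop, mul_one]
  have hcancel2 : n⁻¹ ^ 2 * n ^ 2 = 1 := by
    rw [← mul_pow, ENNReal.inv_mul_cancel hn0 hntop, one_pow]
  simp_rw [mul_pow]
  rw [lintegral_const_mul _ ((Finset.measurable_sum _ fun i _ => hY i).pow_const 2),
    ENNReal.div_eq_inv_mul, ENNReal.div_eq_inv_mul]
  have hscaled := congrArg (n⁻¹ ^ 2 * ·) hsum
  simp only [mul_add, ← mul_assoc, hcancel, mul_pow, hcancel2, one_mul] at hscaled
  exact hscaled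

theorem evariance_average_add_sq_mean_div [IsProbabilityMeasure μ] {ι : Type*} [Fintype ι]
    [Nonempty ι] {Y : ι → Ω → ℝ} (hYm : ∀ i, Measurable (Y i)) (hY0 : ∀ i ω, 0 ≤ Y i ω)
    (hindep : iIndepFun Y μ) {a : ℝ} (ha : 0 ≤ a) {s : ℝ≥0∞}
    (hmean : ∀ i, ∫⁻ ω, ENNReal.ofReal (Y i ω) ∂μ = ENNReal.ofReal a)
    (hsq : ∀ i, ∫⁻ ω, ENNReal.ofReal (Y i ω) ^ 2 ∂μ = s) :
    evariance (fun ω => (1 / (Fintype.card ι : ℝ)) * ∑ i, Y i ω) μ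
      + ENNReal.ofReal a ^ 2 / Fintype.card ι = s / Fintype.card ι := by
  set W : Ω → ℝ := fun ω => (1 / (Fintype.card ι : ℝ)) * ∑ i, Y i ω
  have hWm : Measurable W := measurable_const.mul (Finset.measurable_sum _ fun i _ => hYm i)
  have hW0 : ∀ ω, 0 ≤ W ω := fun ω => by
    have := Finset.sum_nonneg fun i (_ : i ∈ Finset.univ) => hY0 i ω
    positivity
  have hW : ∀ ω, ‖W ω‖ₑ = (Fintype.card ι : ℝ≥0∞)⁻¹ * ∑ i, ENNReal.ofReal (Y i ω) :=
    fun ω => by rw [Real.enorm_eq_ofReal (hW0 ω), ofReal_one_div_card_mul_sum (hY0 · ω)]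
  have hYm' : ∀ i, Measurable fun ω => ENNReal.ofReal (Y i ω) :=
    fun i => ENNReal.measurable_ofReal.comp (hYm i)
  have hmeanW : ∫⁻ ω, ‖W ω‖ₑ ∂μ = ENNReal.ofReal a := by
    simp_rw [hW]
    rw [lintegral_const_mul _ (Finset.measurable_sum _ fun i _ => hYm' i),
      lintegral_finsetSum _ fun i _ => hYm' i]
    simp only [hmean, Finset.sum_const, Finset.card_univ, nsmul_eq_mul]
    rw [← mul_assoc, ENNReal.inv_mul_cancel (by simp) (ENNReal.natCast_ne_top _), one_mul]
  have hsqW : ∫⁻ ω, ‖W ω‖ₑ ^ 2 ∂μ + ENNReal.ofReal a ^ 2 / Fintype.card ι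
      = s / Fintype.card ι + ENNReal.ofReal a ^ 2 := by
    simp_rw [hW]
    exact lintegral_sq_average_add_of_iIndepFun hYm'
      (hindep.comp (fun _ => ENNReal.ofReal) fun _ => ENNReal.measurable_ofReal) hmean hsq
  have hjensen : ENNReal.ofReal a ^ 2 ≤ ∫⁻ ω, ‖W ω‖ₑ ^ 2 ∂μ :=
    hmeanW ▸ sq_lintegral_le_lintegral_sq hWm.enorm.aemeasurable
  have hEW : μ[W] = a := by
    rw [integral_eq_lintegral_of_nonneg_ae (Filter.Eventually.of_forall hW0)
      hWm.aestronglyMeasurable, lintegral_congr fun ω => (Real.enorm_eq_ofReal (hW0 ω)).symm,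
      hmeanW, ENNReal.toReal_ofReal ha]
  rw [evariance_def' hWm.aestronglyMeasurable, hEW, ENNReal.ofReal_pow ha,
    ENNReal.sub_add_eq_add_sub hjensen (by simp), hsqW, ENNReal.add_sub_cancel_right (by simp)]

end SecondMoment

theorem lintegral_comp_eq_lintegral_mul_of_map_eq_withDensity {Ω E : Type*}
    [MeasurableSpace Ω] [MeasurableSpace E] {μ : Measure Ω} {ν : Measure E} {X : Ω → E}
    (hX : Measurable X) {ρ : E → ℝ≥0∞} (hρ : Measurable ρ) (hmap : μ.map X = ν.withDensity ρ)
    {g : E → ℝ≥0∞} (hg : Measurable g) : ∫⁻ ω, g (X ω) ∂μ = ∫⁻ θ, ρ θ * g θ ∂ν := by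
  rw [← lintegral_map hg hX, hmap, lintegral_withDensity_eq_lintegral_mul ν hρ hg, Pi.mul_def]

noncomputable def truncatedHarmonicWeight {E : Type*} (A : Set E) (V : ℝ) (q : E → ℝ) (θ : E) :
    ℝ :=
  A.indicator (fun _ => 1) θ / (V * q θ)

section TruncatedHarmonicWeight

variable {E : Type*} {A : Set E} {V Z : ℝ} {q : E → ℝ}

theorem truncatedHarmonicWeight_nonneg (hV : 0 ≤ V) (hAq : ∀ θ ∈ A, 0 ≤ q θ) (θ : E) :
    0 ≤ truncatedHarmonicWeight A V q θ := by
  unfold truncatedHarmonicWeight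
  by_cases hθ : θ ∈ A
  · have := hAq θ hθ
    simp only [Set.indicator_of_mem hθ]
    positivity
  · simp [Set.indicator_of_notMem hθ]

variable [MeasurableSpace E]

theorem measurable_truncatedHarmonicWeight (hA : MeasurableSet A) (hq : Measurable q) :
    Measurable (truncatedHarmonicWeight A V q) :=
  (measurable_const.indicator hA).div (measurable_const.mul hq)

theorem lintegral_ofReal_mul_truncatedHarmonicWeight {μ : Measure E} (hA : MeasurableSet A)
    (hμA : μ A ≠ 0) (hμA' : μ A ≠ ⊤) (hAq : ∀ θ ∈ A, 0 < q θ) (hZ : 0 < Z) :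
    ∫⁻ θ, ENNReal.ofReal (q θ / Z)
        * ENNReal.ofReal (truncatedHarmonicWeight A (μ A).toReal q θ) ∂μ
      = ENNReal.ofReal Z⁻¹ := by
  have hV : 0 < (μ A).toReal := ENNReal.toReal_pos hμA hμA'
  have hpt : (fun θ => ENNReal.ofReal (q θ / Z)
        * ENNReal.ofReal (truncatedHarmonicWeight A (μ A).toReal q θ))
      = A.indicator fun _ => ENNReal.ofReal (Z * (μ A).toReal)⁻¹ := by
    ext θ
    by_cases hθ : θ ∈ A
    · have := hAq θ hθ
      rw [Set.indicator_of_mem hθ, truncatedHarmonicWeight, Set.indicator_of_mem hθ,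
        ← ENNReal.ofReal_mul (by positivity)]
      congr 1
      field_simp
    · simp [truncatedHarmonicWeight, Set.indicator_of_notMem hθ]
  rw [hpt, lintegral_indicator_const hA]
  calc ENNReal.ofReal (Z * (μ A).toReal)⁻¹ * μ A
      = ENNReal.ofReal ((Z * (μ A).toReal)⁻¹ * (μ A).toReal) := by
        rw [ENNReal.ofReal_mul (by positivity), ENNReal.ofReal_toReal hμA']
    _ = ENNReal.ofReal Z⁻¹ := by
        congr 1
        field_simp

theorem lintegral_ofReal_mul_truncatedHarmonicWeight_sq {μ : Measure E} (hA : MeasurableSet A)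
    (hV : 0 < V) (hAq : ∀ θ ∈ A, 0 < q θ) (hZ : 0 < Z) :
    ∫⁻ θ, ENNReal.ofReal (q θ / Z) * ENNReal.ofReal (truncatedHarmonicWeight A V q θ) ^ 2 ∂μ
      = ENNReal.ofReal Z⁻¹ ^ 2 * ∫⁻ θ in A, ENNReal.ofReal ((1 / V ^ 2) / (q θ / Z)) ∂μ := by
  have hpt : (fun θ => ENNReal.ofReal (q θ / Z)
        * ENNReal.ofReal (truncatedHarmonicWeight A V q θ) ^ 2)
      = A.indicator fun θ =>
          ENNReal.ofReal Z⁻¹ ^ 2 * ENNReal.ofReal ((1 / V ^ 2) / (q θ / Z)) := by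
    ext θ
    by_cases hθ : θ ∈ A
    · have := hAq θ hθ
      rw [Set.indicator_of_mem hθ, truncatedHarmonicWeight, Set.indicator_of_mem hθ,
        ← ENNReal.ofReal_pow (by positivity), ← ENNReal.ofReal_pow (by positivity),
        ← ENNReal.ofReal_mul (by positivity), ← ENNReal.ofReal_mul (by positivity)]
      congr 1
      field_simp
    · simp [truncatedHarmonicWeight, Set.indicator_of_notMem hθ]
  rw [hpt, lintegral_indicator hA, lintegral_const_mul' _ _ (by simp)]

end TruncatedHarmonicWeight

theorem thames_variance_formula_general
    {R : ℕ} (prior L : (Fin R → ℝ) → ℝ)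
    (hprior : Measurable prior) (hL : Measurable L)
    (Z : ℝ) (hZpos : 0 < Z)
    (A : Set (Fin R → ℝ)) (hA : MeasurableSet A)
    (hApos : 0 < volume A) (hAfin : volume A < ⊤)
    (hAsupp : A ⊆ {θ | 0 < prior θ * L θ})
    {Ω : Type} [MeasureSpace Ω] [IsProbabilityMeasure (ℙ : Measure Ω)]
    (M : ℕ) (hM : 0 < M)
    (X : Fin M → Ω → (Fin R → ℝ))
    (hXmeas : ∀ t, Measurable (X t))
    (hXdist : ∀ t, Measure.map (X t) ℙ =
      volume.withDensity (fun θ => ENNReal.ofReal (prior θ * L θ / Z)))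
    (hXindep : iIndepFun X ℙ) :
    evariance (fun ω => (1 / (M : ℝ)) * ∑ t : Fin M,
        A.indicator (fun _ => (1 : ℝ)) (X t ω) /
          ((volume A).toReal * (prior (X t ω) * L (X t ω)))) ℙ
      + ENNReal.ofReal (Z⁻¹ ^ 2 / M)
    = ENNReal.ofReal (Z⁻¹ ^ 2 / M) *
        ∫⁻ θ in A, ENNReal.ofReal
          ((1 / (volume A).toReal ^ 2) / (prior θ * L θ / Z)) := by
  have : Nonempty (Fin M) := ⟨⟨0, hM⟩⟩
  have hV : 0 < (volume A).toReal := ENNReal.toReal_pos hApos.ne' hAfin.ne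
  have hw := measurable_truncatedHarmonicWeight (V := (volume A).toReal) hA (hprior.mul hL)
  have hmoment : ∀ t {g : (Fin R → ℝ) → ℝ≥0∞}, Measurable g →
      ∫⁻ ω, g (X t ω) = ∫⁻ θ, ENNReal.ofReal (prior θ * L θ / Z) * g θ := fun t _ hg =>
    lintegral_comp_eq_lintegral_mul_of_map_eq_withDensity (hXmeas t)
      (ENNReal.measurable_ofReal.comp ((hprior.mul hL).div_const Z)) (hXdist t) hg
  have key := evariance_average_add_sq_mean_div (μ := ℙ)
    (Y := fun t ω => truncatedHarmonicWeight A (volume A).toReal (fun θ => prior θ * L θ) (X t ω))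
    (fun t => hw.comp (hXmeas t))
    (fun t ω => truncatedHarmonicWeight_nonneg hV.le (fun θ hθ => (hAsupp hθ).le) _)
    (hXindep.comp _ fun _ => hw) (inv_nonneg.2 hZpos.le)
    (fun t => (hmoment t (ENNReal.measurable_ofReal.comp hw)).trans
      (lintegral_ofReal_mul_truncatedHarmonicWeight hA hApos.ne' hAfin.ne hAsupp hZpos))
    (fun t => (hmoment t ((ENNReal.measurable_ofReal.comp hw).pow_const 2)).trans
      (lintegral_ofReal_mul_truncatedHarmonicWeight_sq hA hV hAsupp hZpos))
  rw [Fintype.card_fin] at key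
  have hconst : ENNReal.ofReal (Z⁻¹ ^ 2 / M) = ENNReal.ofReal Z⁻¹ ^ 2 / M := by
    rw [ENNReal.ofReal_div_of_pos (by exact_mod_cast hM), ENNReal.ofReal_pow (by positivity),
      ENNReal.ofReal_natCast]
  rw [hconst]
  exact key.trans ENNReal.mul_div_right_comm

/-- Variance of the truncated harmonic mean estimator based on `M` i.i.d. posterior
draws with truncation set `A`:
`Var[Ẑ⁻¹] = (Z⁻²/M) · (∫_A (1/V(A)²)/p(θ) dθ − 1)`,
stated on the extended nonnegative reals as
`Var[Ẑ⁻¹] + Z⁻²/M = (Z⁻²/M) · ∫_A (1/V(A)²)/p(θ) dθ`,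
where `p(θ) = π(θ)L(θ)/Z` is the posterior density, provided `A` is measurable with
`0 < V(A) < ∞` and `A` is contained in the posterior support. -/
theorem thames_variance_formula
    {R : ℕ} (prior L : (Fin R → ℝ) → ℝ)
    (hprior : Measurable prior) (hL : Measurable L)
    (hpriornn : ∀ θ, 0 ≤ prior θ) (hLnn : ∀ θ, 0 ≤ L θ)
    (Z : ℝ) (hZ : Z = ∫ θ, prior θ * L θ) (hZpos : 0 < Z)
    (A : Set (Fin R → ℝ)) (hA : MeasurableSet A)
    (hApos : 0 < volume A) (hAfin : volume A < ⊤)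
    (hAsupp : A ⊆ {θ | 0 < prior θ * L θ})
    {Ω : Type} [MeasureSpace Ω] [IsProbabilityMeasure (ℙ : Measure Ω)]
    (M : ℕ) (hM : 0 < M)
    (X : Fin M → Ω → (Fin R → ℝ))
    (hXmeas : ∀ t, Measurable (X t))
    (hXdist : ∀ t, Measure.map (X t) ℙ =
      volume.withDensity (fun θ => ENNReal.ofReal (prior θ * L θ / Z)))
    (hXindep : iIndepFun X ℙ) :
    evariance (fun ω => (1 / (M : ℝ)) * ∑ t : Fin M,
        A.indicator (fun _ => (1 : ℝ)) (X t ω) /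
          ((volume A).toReal * (prior (X t ω) * L (X t ω)))) ℙ
      + ENNReal.ofReal (Z⁻¹ ^ 2 / M)
    = ENNReal.ofReal (Z⁻¹ ^ 2 / M) *
        ∫⁻ θ in A, ENNReal.ofReal
          ((1 / (volume A).toReal ^ 2) / (prior θ * L θ / Z)) :=
  thames_variance_formula_general prior L hprior hL Z hZpos A hA hApos hAfin hAsupp M hM X hXmeas
    hXdist hXindep
end

section
/- Optimality of HPD truncation (Theorem 1): assume π(θ)L(θ) is continuous on its support and non-constant in the sense that every level set {θ : π(θ)L(θ) = q}, q > 0, has Lebesgue measure zero. For α ∈ (0,1], let H_α = {θ : π(θ)L(θ) > q_α} where q_α is the constant for which the posterior probability of H_α equals α. If θ^(1),…,θ^(M) are i.i.d. draws from the posterior, then for every measurable set A of finite nonzero volume contained in the posterior support there exists α ∈ (0,1] such that the variance of the truncated harmonic mean estimator with truncation set H_α is less than or equal to the variance of the truncated harmonic mean estimator with truncation set A. -/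
/-!
Write `f = π L`. With truncation set `B` the estimator is the mean of `M` i.i.d. copies of
`w_B = 1_B / (V(B) f)`. For every `B` of finite positive volume inside the support of `f`, under
the posterior `w_B` has mean `1 / Z` and second moment `Z⁻¹ ∫_B f⁻¹ / V(B)²`. So the variance is
an increasing function of the cost `∫_B f⁻¹ / V(B)²`, and it suffices to find a superlevel set
`H = {f > q}` costing no more than `A`.

Exchanging `H \ A`, where `f⁻¹ < q⁻¹`, for `A \ H`, where `f⁻¹ ≥ q⁻¹`, gives
`∫_H f⁻¹ + V(A \ H) / q ≤ ∫_A f⁻¹ + V(H \ A) / q`. As the level sets of `f` are null,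
`q ↦ V{f > q}` is continuous on `(0, ∞)`. Either it takes the value `V(A)`, and then
`V(H \ A) = V(A \ H)` gives `∫_H f⁻¹ ≤ ∫_A f⁻¹`; or `A` is the support of `f` up to a null set,
and then for `q` small the gain `V(A \ H) / q` in the integral beats the loss `V(A \ H)` in volume.
-/

open MeasureTheory ProbabilityTheory Filter Topology
open scoped ENNReal

theorem div_sq_sub_le_div_sq {h a c V d : ℝ} (hc : 0 ≤ c) (hd : 0 ≤ d) (hdV : d < V)
    (hh : 0 ≤ h) (hha : h + c * d ≤ a) (haV : 2 * a ≤ c * V) :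
    h / (V - d) ^ 2 ≤ a / V ^ 2 := by
  rw [div_le_div_iff₀ (by nlinarith) (by nlinarith)]
  nlinarith [mul_le_mul_of_nonneg_right haV (mul_nonneg (hd.trans hdV.le) hd),
    mul_nonneg (hh.trans (le_add_of_nonneg_right (mul_nonneg hc hd)) |>.trans hha) (sq_nonneg d)]

section Superlevel

variable {α : Type*} [MeasurableSpace α] {μ : Measure α} {f : α → ℝ}

theorem measure_setOf_lt_antitone : Antitone fun q => μ {x | q < f x} :=
  fun _ _ hpq => measure_mono fun _ hx => hpq.trans_lt hx

theorem measure_setOf_lt_le_of_forall_gt {q : ℝ} {s : ℝ≥0∞}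
    (h : ∀ p, q < p → μ {x | p < f x} ≤ s) : μ {x | q < f x} ≤ s := by
  obtain ⟨u, hu_anti, hu_mem, hu_lim⟩ := exists_seq_strictAnti_tendsto' (lt_add_one q)
  have hunion : {x | q < f x} = ⋃ n, {x | u n < f x} := by
    ext x
    simp only [Set.mem_ofPred_eq, Set.mem_iUnion]
    refine ⟨fun hx => (hu_lim.eventually (gt_mem_nhds hx)).exists, ?_⟩
    rintro ⟨n, hn⟩
    exact (hu_mem n).1.trans hn
  have hmono : Monotone fun n => {x | u n < f x} :=
    fun m n hmn x hx => (hu_anti.antitone hmn).trans_lt hx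
  rw [hunion, hmono.measure_iUnion]
  exact iSup_le fun n => h _ (hu_mem n).1

theorem le_measure_setOf_le_of_forall_lt (hf : Measurable f) {p q : ℝ} {s : ℝ≥0∞}
    (hpq : p < q) (hfin : μ {x | p < f x} ≠ ⊤) (h : ∀ r ∈ Set.Ioo p q, s ≤ μ {x | r < f x}) :
    s ≤ μ {x | q ≤ f x} := by
  obtain ⟨u, hu_mono, hu_mem, hu_lim⟩ := exists_seq_strictMono_tendsto' hpq
  have hinter : {x | q ≤ f x} = ⋂ n, {x | u n < f x} := by
    ext x
    simp only [Set.mem_ofPred_eq, Set.mem_iInter]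
    refine ⟨fun hx n => (hu_mem n).2.trans_le hx, fun hx => not_lt.mp fun hlt => ?_⟩
    obtain ⟨n, hn⟩ := (hu_lim.eventually (lt_mem_nhds hlt)).exists
    exact (hx n).not_gt hn
  have hanti : Antitone fun n => {x | u n < f x} :=
    fun m n hmn x hx => (hu_mono.monotone hmn).trans_lt hx
  rw [hinter, hanti.measure_iInter
    (fun _ => (measurableSet_lt measurable_const hf).nullMeasurableSet)
    ⟨0, ne_top_of_le_ne_top hfin (measure_mono fun _ hx => (hu_mem 0).1.trans hx)⟩]
  exact le_iInf fun n => h _ (hu_mem n)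

theorem exists_measure_setOf_lt_eq_or_measure_setOf_pos_le (hf : Measurable f)
    (hlevel : ∀ q, 0 < q → μ {x | f x = q} = 0) (hfin : ∀ q, 0 < q → μ {x | q < f x} ≠ ⊤)
    {s : ℝ≥0∞} (hs : ∃ q, 0 < q ∧ μ {x | q < f x} ≤ s) :
    (∃ q, 0 < q ∧ μ {x | q < f x} = s) ∨ μ {x | 0 < f x} ≤ s := by
  set T := {q | 0 < q ∧ μ {x | q < f x} ≤ s}
  have hT : BddBelow T := ⟨0, fun _ hq => hq.1.le⟩
  have habove : ∀ p, sInf T < p → μ {x | p < f x} ≤ s := fun p hp => by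
    obtain ⟨t, htT, htp⟩ := (csInf_lt_iff hT hs).mp hp
    exact (measure_setOf_lt_antitone htp.le).trans htT.2
  rcases le_or_gt (sInf T) 0 with hq₀ | hq₀
  · exact .inr (measure_setOf_lt_le_of_forall_gt fun p hp => habove p (hq₀.trans_lt hp))
  refine .inl ⟨sInf T, hq₀, le_antisymm (measure_setOf_lt_le_of_forall_gt habove) ?_⟩
  have hbelow : ∀ r ∈ Set.Ioo (sInf T / 2) (sInf T), s ≤ μ {x | r < f x} := fun r hr =>
    le_of_lt <| not_le.mp fun hle =>
      notMem_of_lt_csInf hr.2 hT ⟨(half_pos hq₀).trans hr.1, hle⟩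
  calc s ≤ μ {x | sInf T ≤ f x} :=
        le_measure_setOf_le_of_forall_lt hf (half_lt_self hq₀) (hfin _ (half_pos hq₀)) hbelow
    _ ≤ μ ({x | sInf T < f x} ∪ {x | f x = sInf T}) :=
        measure_mono fun x (hx : sInf T ≤ f x) => hx.lt_or_eq.imp id Eq.symm
    _ ≤ μ {x | sInf T < f x} := by
        grw [measure_union_le, hlevel _ hq₀, add_zero]

theorem measure_setOf_lt_le_lintegral_div (hf : Measurable f) {q : ℝ} (hq : 0 < q) :
    μ {x | q < f x} ≤ (∫⁻ x, ENNReal.ofReal (f x) ∂μ) / ENNReal.ofReal q :=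
  (measure_mono fun _ hx => ENNReal.ofReal_le_ofReal (le_of_lt hx)).trans <|
    meas_ge_le_lintegral_div hf.ennreal_ofReal.aemeasurable (ENNReal.ofReal_pos.2 hq).ne'
      ENNReal.ofReal_ne_top

theorem exists_pos_measure_setOf_lt_le (hf : Measurable f)
    (hint : ∫⁻ x, ENNReal.ofReal (f x) ∂μ ≠ ⊤) {s : ℝ≥0∞} (hs : s ≠ 0) :
    ∃ q, 0 < q ∧ μ {x | q < f x} ≤ s := by
  have hlim :
      Tendsto (fun q => (∫⁻ x, ENNReal.ofReal (f x) ∂μ) / ENNReal.ofReal q) atTop (𝓝 0) := by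
    simpa using ENNReal.Tendsto.const_div ENNReal.tendsto_ofReal_atTop (.inr hint)
  obtain ⟨q, hqs, hq⟩ :=
    ((hlim.eventually (gt_mem_nhds (pos_iff_ne_zero.2 hs))).and (eventually_gt_atTop 0)).exists
  exact ⟨q, hq, (measure_setOf_lt_le_lintegral_div hf hq).trans hqs.le⟩

end Superlevel

section TruncationCost

variable {α : Type*} [MeasurableSpace α] {μ : Measure α} {f : α → ℝ}

theorem setLIntegral_add_mul_measure_sdiff_le {g : α → ℝ≥0∞} {c : ℝ≥0∞} {A H : Set α}
    (hA : MeasurableSet A) (hH : MeasurableSet H) (hgH : ∀ x ∈ H \ A, g x ≤ c)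
    (hgA : ∀ x ∈ A \ H, c ≤ g x) :
    ∫⁻ x in H, g x ∂μ + c * μ (A \ H) ≤ ∫⁻ x in A, g x ∂μ + c * μ (H \ A) := by
  have hHA : ∫⁻ x in H \ A, g x ∂μ ≤ c * μ (H \ A) :=
    (setLIntegral_mono' (hH.diff hA) hgH).trans_eq (setLIntegral_const _ _)
  have hAH : c * μ (A \ H) ≤ ∫⁻ x in A \ H, g x ∂μ :=
    (setLIntegral_const _ _).symm.trans_le (setLIntegral_mono' (hA.diff hH) hgA)
  rw [← lintegral_inter_add_sdiff g H hA, ← lintegral_inter_add_sdiff g A hH, Set.inter_comm]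
  calc _ ≤ ∫⁻ x in A ∩ H, g x ∂μ + c * μ (H \ A) + ∫⁻ x in A \ H, g x ∂μ := by gcongr
    _ = _ := add_right_comm _ _ _

noncomputable def truncationCost (μ : Measure α) (f : α → ℝ) (B : Set α) : ℝ≥0∞ :=
  (∫⁻ x in B, ENNReal.ofReal (f x)⁻¹ ∂μ) / μ B ^ 2

theorem truncationCost_eq_ofReal {B : Set α} (hB0 : μ B ≠ 0) (hBfin : μ B ≠ ⊤)
    (hint : ∫⁻ x in B, ENNReal.ofReal (f x)⁻¹ ∂μ ≠ ⊤) :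
    truncationCost μ f B =
      ENNReal.ofReal ((∫⁻ x in B, ENNReal.ofReal (f x)⁻¹ ∂μ).toReal / (μ B).toReal ^ 2) := by
  rw [ENNReal.ofReal_div_of_pos (by positivity [ENNReal.toReal_pos hB0 hBfin]),
    ENNReal.ofReal_toReal hint, ENNReal.ofReal_pow ENNReal.toReal_nonneg,
    ENNReal.ofReal_toReal hBfin, truncationCost]

theorem setLIntegral_inv_setOf_lt_add_le (hf : Measurable f) {q : ℝ} (hq : 0 < q) {A : Set α}
    (hA : MeasurableSet A) (hApos : A ⊆ {x | 0 < f x}) :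
    ∫⁻ x in {x | q < f x}, ENNReal.ofReal (f x)⁻¹ ∂μ + ENNReal.ofReal q⁻¹ * μ (A \ {x | q < f x})
      ≤ ∫⁻ x in A, ENNReal.ofReal (f x)⁻¹ ∂μ + ENNReal.ofReal q⁻¹ * μ ({x | q < f x} \ A) :=
  setLIntegral_add_mul_measure_sdiff_le hA (measurableSet_lt measurable_const hf)
    (fun _ hx => ENNReal.ofReal_le_ofReal (inv_anti₀ hq hx.1.le))
    (fun _ hx => ENNReal.ofReal_le_ofReal (inv_anti₀ (hApos hx.1) (not_lt.mp hx.2)))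

theorem truncationCost_setOf_lt_le_of_measure_eq (hf : Measurable f) {q : ℝ} (hq : 0 < q)
    {A : Set α} (hA : MeasurableSet A) (hApos : A ⊆ {x | 0 < f x}) (hAfin : μ A ≠ ⊤)
    (heq : μ {x | q < f x} = μ A) :
    truncationCost μ f {x | q < f x} ≤ truncationCost μ f A := by
  have hsymm : μ ({x | q < f x} \ A) = μ (A \ {x | q < f x}) :=
    measure_sdiff_symm (measurableSet_lt measurable_const hf).nullMeasurableSet
      hA.nullMeasurableSet heq (measure_ne_top_of_subset Set.inter_subset_right hAfin)
  have h := setLIntegral_inv_setOf_lt_add_le (μ := μ) hf hq hA hApos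
  rw [hsymm, ENNReal.add_le_add_iff_right (ENNReal.mul_ne_top ENNReal.ofReal_ne_top
    (measure_ne_top_of_subset Set.sdiff_subset hAfin))] at h
  rw [truncationCost, truncationCost, heq]
  gcongr

theorem truncationCost_setOf_lt_le_of_measure_sdiff_eq_zero (hf : Measurable f) {q : ℝ}
    (hq : 0 < q) {A : Set α} (hA : MeasurableSet A) (hApos : A ⊆ {x | 0 < f x})
    (hAfin : μ A ≠ ⊤) (hH0 : μ {x | q < f x} ≠ 0) (hnull : μ ({x | q < f x} \ A) = 0)
    (hsmall : 2 * q * (∫⁻ x in A, ENNReal.ofReal (f x)⁻¹ ∂μ).toReal ≤ (μ A).toReal) :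
    truncationCost μ f {x | q < f x} ≤ truncationCost μ f A := by
  set H := {x | q < f x}
  have hH : MeasurableSet H := measurableSet_lt measurable_const hf
  by_cases hIA : ∫⁻ x in A, ENNReal.ofReal (f x)⁻¹ ∂μ = ⊤
  · unfold truncationCost
    rw [hIA, ENNReal.top_div_of_ne_top (ENNReal.pow_ne_top hAfin)]
    exact le_top
  have hswap := setLIntegral_inv_setOf_lt_add_le (μ := μ) hf hq hA hApos
  rw [hnull, mul_zero, add_zero] at hswap
  have hvol : μ H + μ (A \ H) = μ A := by
    rw [← measure_inter_add_sdiff A hH, Set.inter_comm, ← add_zero (μ (H ∩ A)), ← hnull,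
      measure_inter_add_sdiff H hA]
  have hHfin : μ H ≠ ⊤ := ne_top_of_le_ne_top hAfin (hvol ▸ le_self_add)
  have hdfin : μ (A \ H) ≠ ⊤ := measure_ne_top_of_subset Set.sdiff_subset hAfin
  have hIH : ∫⁻ x in H, ENNReal.ofReal (f x)⁻¹ ∂μ ≠ ⊤ :=
    ne_top_of_le_ne_top hIA (le_self_add.trans hswap)
  have hVd : (μ H).toReal = (μ A).toReal - (μ (A \ H)).toReal := by
    rw [← hvol, ENNReal.toReal_add hHfin hdfin, add_sub_cancel_right]
  have hha := ENNReal.toReal_mono hIA hswap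
  rw [ENNReal.toReal_add hIH (ENNReal.mul_ne_top ENNReal.ofReal_ne_top hdfin),
    ENNReal.toReal_mul, ENNReal.toReal_ofReal (inv_nonneg.2 hq.le)] at hha
  rw [truncationCost_eq_ofReal hH0 hHfin hIH,
    truncationCost_eq_ofReal (ne_bot_of_le_ne_bot hH0 (hvol ▸ le_self_add)) hAfin hIA, hVd]
  refine ENNReal.ofReal_le_ofReal (div_sq_sub_le_div_sq (inv_nonneg.2 hq.le)
    ENNReal.toReal_nonneg ?_ ENNReal.toReal_nonneg hha ?_)
  · linarith [ENNReal.toReal_pos hH0 hHfin]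
  · rw [← div_eq_inv_mul, le_div_iff₀ hq]
    linarith

theorem exists_truncationCost_setOf_lt_le (hf : Measurable f)
    (hint : ∫⁻ x, ENNReal.ofReal (f x) ∂μ ≠ ⊤) (hlevel : ∀ q, 0 < q → μ {x | f x = q} = 0)
    {A : Set α} (hA : MeasurableSet A) (hA0 : μ A ≠ 0) (hAfin : μ A ≠ ⊤)
    (hApos : A ⊆ {x | 0 < f x}) :
    ∃ q, 0 < q ∧ μ {x | q < f x} ≠ 0 ∧ μ {x | q < f x} ≠ ⊤ ∧
      truncationCost μ f {x | q < f x} ≤ truncationCost μ f A := by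
  have hfin : ∀ q, 0 < q → μ {x | q < f x} ≠ ⊤ := fun q hq =>
    ne_top_of_le_ne_top (ENNReal.div_ne_top hint (ENNReal.ofReal_pos.2 hq).ne')
      (measure_setOf_lt_le_lintegral_div hf hq)
  rcases exists_measure_setOf_lt_eq_or_measure_setOf_pos_le hf hlevel hfin
    (exists_pos_measure_setOf_lt_le hf hint hA0) with ⟨q, hq, heq⟩ | hsupp
  · exact ⟨q, hq, heq ▸ hA0, hfin q hq,
      truncationCost_setOf_lt_le_of_measure_eq hf hq hA hApos hAfin heq⟩
  -- Otherwise `A` is the support of `f` up to a null set, and every small enough level works.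
  obtain ⟨p, hp, hp0⟩ : ∃ p, 0 < p ∧ μ {x | p < f x} ≠ 0 := by
    by_contra! h
    exact hA0 (le_bot_iff.mp <| (measure_mono hApos).trans
      (measure_setOf_lt_le_of_forall_gt fun p hp => (h p hp).le))
  have hnull : μ ({x | 0 < f x} \ A) = 0 := by
    rw [measure_sdiff hApos hA.nullMeasurableSet hAfin]
    exact tsub_eq_zero_of_le hsupp
  set a := (∫⁻ x in A, ENNReal.ofReal (f x)⁻¹ ∂μ).toReal
  have hV : 0 < (μ A).toReal := ENNReal.toReal_pos hA0 hAfin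
  set q := min p ((μ A).toReal / (2 * a + 1))
  have hq : 0 < q := lt_min hp (by positivity)
  have hH0 : μ {x | q < f x} ≠ 0 :=
    ne_bot_of_le_ne_bot hp0 (measure_setOf_lt_antitone (min_le_left _ _))
  have hsmall : 2 * q * a ≤ (μ A).toReal := by
    have := (le_div_iff₀ (by positivity)).mp (min_le_right p ((μ A).toReal / (2 * a + 1)))
    nlinarith [ENNReal.toReal_nonneg (a := ∫⁻ x in A, ENNReal.ofReal (f x)⁻¹ ∂μ)]
  exact ⟨q, hq, hH0, hfin q hq, truncationCost_setOf_lt_le_of_measure_sdiff_eq_zero hf hq hA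
    hApos hAfin hH0 (measure_mono_null (Set.sdiff_subset_sdiff_left fun _ hx => hq.trans hx) hnull)
    hsmall⟩

end TruncationCost

section Moments

variable {Ω : Type*} [MeasurableSpace Ω] {P : Measure Ω}

theorem evariance_add_sq_lintegral [IsProbabilityMeasure P] {Y : Ω → ℝ} (hY : Measurable Y)
    (hY0 : ∀ ω, 0 ≤ Y ω) (hfin : ∫⁻ ω, ENNReal.ofReal (Y ω) ∂P ≠ ⊤) :
    evariance Y P + (∫⁻ ω, ENNReal.ofReal (Y ω) ∂P) ^ 2 = ∫⁻ ω, ENNReal.ofReal (Y ω) ^ 2 ∂P := by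
  have hm : ENNReal.ofReal P[Y] = ∫⁻ ω, ENNReal.ofReal (Y ω) ∂P := by
    rw [integral_eq_lintegral_of_nonneg_ae (ae_of_all _ hY0) hY.aestronglyMeasurable,
      ENNReal.ofReal_toReal hfin]
  have hm0 : 0 ≤ P[Y] := integral_nonneg hY0
  set m := P[Y]
  -- `(Y - m)² + 2 m Y = Y² + m²` has only nonnegative terms, so it survives in `ℝ≥0∞`.
  have hpt : ∀ ω, ENNReal.ofReal ((Y ω - m) ^ 2) + ENNReal.ofReal (2 * m) * ENNReal.ofReal (Y ω)
      = ENNReal.ofReal (Y ω) ^ 2 + ENNReal.ofReal m ^ 2 := fun ω => by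
    rw [← ENNReal.ofReal_mul (by positivity), ← ENNReal.ofReal_add (sq_nonneg _)
      (mul_nonneg (by positivity) (hY0 ω)), ← ENNReal.ofReal_pow (hY0 ω),
      ← ENNReal.ofReal_pow hm0, ← ENNReal.ofReal_add (sq_nonneg _) (sq_nonneg _)]
    congr 1
    ring
  have hint := lintegral_congr (μ := P) hpt
  rw [lintegral_add_left (by fun_prop), lintegral_const_mul _ hY.ennreal_ofReal,
    lintegral_add_right _ measurable_const, lintegral_const, measure_univ, mul_one,
    ← evariance_eq_lintegral_ofReal, ← hm, ← ENNReal.ofReal_mul (by positivity),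
    show 2 * m * m = m ^ 2 + m ^ 2 by ring, ENNReal.ofReal_add (sq_nonneg _) (sq_nonneg _),
    ← add_assoc, ENNReal.ofReal_pow hm0] at hint
  rw [← hm]
  exact (ENNReal.add_left_inj (ENNReal.pow_ne_top ENNReal.ofReal_ne_top)).mp hint

variable {E : Type*} [MeasurableSpace E] {ν : Measure E}

theorem lintegral_sum_comp_sq {ι : Type*} [Fintype ι] [DecidableEq ι] {X : ι → Ω → E}
    (hX : ∀ i, MeasurePreserving (X i) P ν) (hind : iIndepFun X P) {ψ : E → ℝ≥0∞}
    (hψ : Measurable ψ) :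
    ∫⁻ ω, (∑ i, ψ (X i ω)) ^ 2 ∂P =
      ∑ i : ι, ∑ j : ι, if i = j then ∫⁻ x, ψ x ^ 2 ∂ν else (∫⁻ x, ψ x ∂ν) ^ 2 := by
  have hmeas : ∀ i, Measurable fun ω => ψ (X i ω) := fun i => hψ.comp (hX i).measurable
  have hmul : ∀ i j, Measurable fun ω => ψ (X i ω) * ψ (X j ω) :=
    fun i j => (hmeas i).fun_mul (hmeas j)
  rw [lintegral_congr fun ω => by rw [sq, Finset.sum_mul_sum],
    lintegral_finsetSum _ fun i _ => Finset.measurable_sum _ fun j _ => hmul i j]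
  refine Finset.sum_congr rfl fun i _ => ?_
  rw [lintegral_finsetSum _ fun j _ => hmul i j]
  refine Finset.sum_congr rfl fun j _ => ?_
  split_ifs with hij
  · subst hij
    simp_rw [← sq]
    exact (hX i).lintegral_comp (hψ.pow_const 2)
  · refine (lintegral_mul_eq_lintegral_mul_lintegral_of_indepFun (hmeas i) (hmeas j)
      ((hind.indepFun hij).comp hψ hψ)).trans ?_
    rw [(hX i).lintegral_comp hψ, (hX j).lintegral_comp hψ, sq]

theorem evariance_empiricalMean_add_sq [IsProbabilityMeasure P] {M : ℕ} (hM : 0 < M)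
    {X : Fin M → Ω → E} (hX : ∀ t, MeasurePreserving (X t) P ν) (hind : iIndepFun X P)
    {φ : E → ℝ} (hφ : Measurable φ) (hφ0 : ∀ x, 0 ≤ φ x)
    (hfin : ∫⁻ x, ENNReal.ofReal (φ x) ∂ν ≠ ⊤) :
    evariance (fun ω => (1 / (M : ℝ)) * ∑ t, φ (X t ω)) P + (∫⁻ x, ENNReal.ofReal (φ x) ∂ν) ^ 2
      = ENNReal.ofReal (1 / M) ^ 2 * ∑ t : Fin M, ∑ s : Fin M, if t = s
          then ∫⁻ x, ENNReal.ofReal (φ x) ^ 2 ∂ν else (∫⁻ x, ENNReal.ofReal (φ x) ∂ν) ^ 2 := by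
  have hS : ∀ ω, ENNReal.ofReal ((1 / (M : ℝ)) * ∑ t, φ (X t ω))
      = ENNReal.ofReal (1 / M) * ∑ t, ENNReal.ofReal (φ (X t ω)) := fun ω => by
    rw [ENNReal.ofReal_mul (by positivity), ENNReal.ofReal_sum_of_nonneg fun t _ => hφ0 _]
  have hmeas : ∀ t, Measurable fun ω => ENNReal.ofReal (φ (X t ω)) :=
    fun t => hφ.ennreal_ofReal.comp (hX t).measurable
  have hmean : ∫⁻ ω, ENNReal.ofReal ((1 / (M : ℝ)) * ∑ t, φ (X t ω)) ∂P
      = ∫⁻ x, ENNReal.ofReal (φ x) ∂ν := by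
    rw [lintegral_congr hS, lintegral_const_mul _ (Finset.measurable_sum _ fun t _ => hmeas t),
      lintegral_finsetSum _ fun t _ => hmeas t,
      Finset.sum_congr rfl fun t _ => (hX t).lintegral_comp hφ.ennreal_ofReal,
      Finset.sum_const, Finset.card_univ, Fintype.card_fin, nsmul_eq_mul, ← mul_assoc,
      ENNReal.ofReal_div_of_pos (by positivity), ENNReal.ofReal_one, ENNReal.ofReal_natCast,
      ENNReal.div_mul_cancel (by simp [hM.ne']) (ENNReal.natCast_ne_top M), one_mul]
  have hvar := evariance_add_sq_lintegral (Y := fun ω => (1 / (M : ℝ)) * ∑ t, φ (X t ω))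
    ((Finset.measurable_sum _ fun t _ => hφ.comp (hX t).measurable).const_mul _)
    (fun ω => mul_nonneg (by positivity) (Finset.sum_nonneg fun t _ => hφ0 _)) (hmean ▸ hfin)
  rw [hmean] at hvar
  rw [hvar, lintegral_congr fun ω => by rw [hS, mul_pow],
    lintegral_const_mul _ ((Finset.measurable_sum _ fun t _ => hmeas t).pow_const 2),
    lintegral_sum_comp_sq hX hind hφ.ennreal_ofReal]

theorem evariance_empiricalMean_mono [IsProbabilityMeasure P] {M : ℕ} (hM : 0 < M)
    {X : Fin M → Ω → E} (hX : ∀ t, MeasurePreserving (X t) P ν) (hind : iIndepFun X P)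
    {φ₁ φ₂ : E → ℝ} (hφ₁ : Measurable φ₁) (hφ₂ : Measurable φ₂) (hφ₁0 : ∀ x, 0 ≤ φ₁ x)
    (hφ₂0 : ∀ x, 0 ≤ φ₂ x)
    (hmean : ∫⁻ x, ENNReal.ofReal (φ₁ x) ∂ν = ∫⁻ x, ENNReal.ofReal (φ₂ x) ∂ν)
    (hfin : ∫⁻ x, ENNReal.ofReal (φ₁ x) ∂ν ≠ ⊤)
    (hsq : ∫⁻ x, ENNReal.ofReal (φ₁ x) ^ 2 ∂ν ≤ ∫⁻ x, ENNReal.ofReal (φ₂ x) ^ 2 ∂ν) :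
    evariance (fun ω => (1 / (M : ℝ)) * ∑ t, φ₁ (X t ω)) P
      ≤ evariance (fun ω => (1 / (M : ℝ)) * ∑ t, φ₂ (X t ω)) P := by
  have h₁ := evariance_empiricalMean_add_sq hM hX hind hφ₁ hφ₁0 hfin
  have h₂ := evariance_empiricalMean_add_sq hM hX hind hφ₂ hφ₂0 (hmean ▸ hfin)
  rw [← hmean] at h₂
  refine (ENNReal.add_le_add_iff_right (ENNReal.pow_ne_top (n := 2) hfin)).mp ?_
  rw [h₁, h₂]
  gcongr with t _ s _
  split_ifs
  exacts [hsq, le_rfl]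

end Moments

section Posterior

variable {α : Type*} [MeasurableSpace α] {μ : Measure α} {f : α → ℝ} {Z : ℝ}

noncomputable def truncationWeight (μ : Measure α) (f : α → ℝ) (B : Set α) (x : α) : ℝ :=
  B.indicator (fun _ => (1 : ℝ)) x / ((μ B).toReal * f x)

theorem measurable_truncationWeight (hf : Measurable f) {B : Set α} (hB : MeasurableSet B) :
    Measurable (truncationWeight μ f B) :=
  (measurable_const.indicator hB).div (measurable_const.mul hf)

theorem truncationWeight_nonneg {B : Set α} (hB : B ⊆ {x | 0 < f x}) (x : α) :
    0 ≤ truncationWeight μ f B x := by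
  by_cases hx : x ∈ B
  · have hfx : 0 < f x := hB hx
    simp only [truncationWeight, Set.indicator_of_mem hx]
    positivity
  · simp [truncationWeight, Set.indicator_of_notMem hx]

theorem lintegral_truncationWeight_withDensity (hf : Measurable f) (hZ : 0 < Z) {B : Set α}
    (hB : MeasurableSet B) (hBpos : B ⊆ {x | 0 < f x}) (hB0 : μ B ≠ 0) (hBfin : μ B ≠ ⊤) :
    ∫⁻ x, ENNReal.ofReal (truncationWeight μ f B x)
        ∂μ.withDensity (fun x => ENNReal.ofReal (f x / Z))
      = ENNReal.ofReal Z⁻¹ := by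
  have hV := ENNReal.toReal_pos hB0 hBfin
  have hpt : ∀ x, ENNReal.ofReal (f x / Z) * ENNReal.ofReal (truncationWeight μ f B x)
      = B.indicator (fun _ => ENNReal.ofReal ((μ B).toReal * Z)⁻¹) x := fun x => by
    by_cases hx : x ∈ B
    · have hfx : 0 < f x := hBpos hx
      rw [Set.indicator_of_mem hx, truncationWeight, Set.indicator_of_mem hx,
        ← ENNReal.ofReal_mul (by positivity)]
      congr 1
      field_simp
    · simp [truncationWeight, Set.indicator_of_notMem hx]
  rw [lintegral_withDensity_eq_lintegral_mul _ (hf.div_const Z).ennreal_ofReal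
      (measurable_truncationWeight hf hB).ennreal_ofReal]
  simp_rw [Pi.mul_apply, hpt]
  rw [lintegral_indicator hB, setLIntegral_const, ← ENNReal.ofReal_toReal hBfin,
    ← ENNReal.ofReal_mul (by positivity), ENNReal.toReal_ofReal ENNReal.toReal_nonneg]
  congr 1
  field_simp

theorem lintegral_truncationWeight_sq_withDensity (hf : Measurable f) (hZ : 0 < Z) {B : Set α}
    (hB : MeasurableSet B) (hBpos : B ⊆ {x | 0 < f x}) (hB0 : μ B ≠ 0) (hBfin : μ B ≠ ⊤) :
    ∫⁻ x, ENNReal.ofReal (truncationWeight μ f B x) ^ 2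
        ∂μ.withDensity (fun x => ENNReal.ofReal (f x / Z))
      = ENNReal.ofReal Z⁻¹ * truncationCost μ f B := by
  have hV := ENNReal.toReal_pos hB0 hBfin
  have hpt : ∀ x, ENNReal.ofReal (f x / Z) * ENNReal.ofReal (truncationWeight μ f B x) ^ 2
      = ENNReal.ofReal Z⁻¹ * (μ B ^ 2)⁻¹ * B.indicator (fun x => ENNReal.ofReal (f x)⁻¹) x :=
    fun x => by
      rw [← ENNReal.ofReal_toReal hBfin, ← ENNReal.ofReal_pow hV.le,
        ← ENNReal.ofReal_inv_of_pos (by positivity)]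
      by_cases hx : x ∈ B
      · have hfx : 0 < f x := hBpos hx
        rw [Set.indicator_of_mem hx, truncationWeight, Set.indicator_of_mem hx,
          ← ENNReal.ofReal_pow (by positivity), ← ENNReal.ofReal_mul (by positivity),
          ← ENNReal.ofReal_mul (by positivity), ← ENNReal.ofReal_mul (by positivity)]
        congr 1
        field_simp
      · simp [truncationWeight, Set.indicator_of_notMem hx]
  rw [lintegral_withDensity_eq_lintegral_mul _ (hf.div_const Z).ennreal_ofReal
      ((measurable_truncationWeight hf hB).ennreal_ofReal.pow_const 2)]
  simp_rw [Pi.mul_apply, hpt]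
  rw [lintegral_const_mul _
      ((by fun_prop : Measurable fun x => ENNReal.ofReal (f x)⁻¹).indicator hB),
    lintegral_indicator hB, truncationCost, ENNReal.div_eq_inv_mul, mul_assoc]

theorem lintegral_ofReal_ne_top_of_withDensity (hZ : 0 < Z)
    [IsFiniteMeasure (μ.withDensity fun x => ENNReal.ofReal (f x / Z))] :
    ∫⁻ x, ENNReal.ofReal (f x) ∂μ ≠ ⊤ := by
  have hfin := measure_ne_top (μ.withDensity fun x => ENNReal.ofReal (f x / Z)) Set.univ
  rw [withDensity_apply _ MeasurableSet.univ, Measure.restrict_univ] at hfin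
  rw [lintegral_congr fun x => by rw [← mul_div_cancel₀ (f x) hZ.ne', ENNReal.ofReal_mul hZ.le],
    lintegral_const_mul' _ _ ENNReal.ofReal_ne_top]
  exact ENNReal.mul_ne_top ENNReal.ofReal_ne_top hfin

theorem withDensity_ofReal_div_ne_zero (hf : Measurable f) (hZ : 0 < Z) {B : Set α}
    (hBpos : B ⊆ {x | 0 < f x}) (hB0 : μ B ≠ 0) :
    μ.withDensity (fun x => ENNReal.ofReal (f x / Z)) B ≠ 0 := by
  have hB : B ⊆ {x | ENNReal.ofReal (f x / Z) ≠ 0} := fun _ hx =>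
    (ENNReal.ofReal_pos.2 (div_pos (hBpos hx) hZ)).ne'
  rwa [Ne, withDensity_apply_eq_zero (hf.div_const Z).ennreal_ofReal, Set.inter_eq_right.mpr hB]

end Posterior

theorem thames_hpd_truncation_optimal_general
    {R : ℕ} (prior L : (Fin R → ℝ) → ℝ)
    (hprior : Measurable prior) (hL : Measurable L)
    (Z : ℝ) (hZpos : 0 < Z)
    (hlevel : ∀ q : ℝ, 0 < q → volume {θ | prior θ * L θ = q} = 0)
    (A : Set (Fin R → ℝ)) (hA : MeasurableSet A)
    (hApos : 0 < volume A) (hAfin : volume A < ⊤)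
    (hAsupp : A ⊆ {θ | 0 < prior θ * L θ})
    {Ω : Type} [MeasureSpace Ω] [IsProbabilityMeasure (ℙ : Measure Ω)]
    (M : ℕ) (hM : 0 < M)
    (X : Fin M → Ω → (Fin R → ℝ))
    (hXmeas : ∀ t, Measurable (X t))
    (hXdist : ∀ t, Measure.map (X t) ℙ =
      volume.withDensity (fun θ => ENNReal.ofReal (prior θ * L θ / Z)))
    (hXindep : iIndepFun X ℙ) :
    ∃ α ∈ Set.Ioc (0 : ℝ) 1, ∃ qα : ℝ, 0 < qα ∧
      (volume.withDensity (fun θ => ENNReal.ofReal (prior θ * L θ / Z)))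
          {θ | qα < prior θ * L θ} = ENNReal.ofReal α ∧
      evariance (fun ω => (1 / (M : ℝ)) * ∑ t : Fin M,
          ({θ | qα < prior θ * L θ}).indicator (fun _ => (1 : ℝ)) (X t ω) /
            ((volume {θ | qα < prior θ * L θ}).toReal * (prior (X t ω) * L (X t ω)))) ℙ
        ≤ evariance (fun ω => (1 / (M : ℝ)) * ∑ t : Fin M,
            A.indicator (fun _ => (1 : ℝ)) (X t ω) /
              ((volume A).toReal * (prior (X t ω) * L (X t ω)))) ℙ := by
  set f := fun θ => prior θ * L θ
  set ν := volume.withDensity fun θ => ENNReal.ofReal (f θ / Z)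
  have hf : Measurable f := hprior.mul hL
  have hX : ∀ t, MeasurePreserving (X t) ℙ ν := fun t => ⟨hXmeas t, hXdist t⟩
  have : IsProbabilityMeasure ν :=
    hXdist ⟨0, hM⟩ ▸ Measure.isProbabilityMeasure_map (hXmeas _).aemeasurable
  obtain ⟨q, hq, hH0, hHfin, hcost⟩ := exists_truncationCost_setOf_lt_le hf
    (lintegral_ofReal_ne_top_of_withDensity hZpos) hlevel hA hApos.ne' hAfin.ne hAsupp
  set H := {θ | q < f θ}
  have hH : MeasurableSet H := measurableSet_lt measurable_const hf
  have hHsupp : H ⊆ {θ | 0 < f θ} := fun θ hθ => hq.trans hθ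
  have hνH : ν H ≠ 0 := withDensity_ofReal_div_ne_zero hf hZpos hHsupp hH0
  refine ⟨(ν H).toReal, ⟨ENNReal.toReal_pos hνH (measure_ne_top ν H), measureReal_le_one⟩, q, hq,
    (ENNReal.ofReal_toReal (measure_ne_top ν H)).symm, ?_⟩
  refine evariance_empiricalMean_mono (φ₁ := truncationWeight volume f H)
    (φ₂ := truncationWeight volume f A) hM hX hXindep (measurable_truncationWeight hf hH)
    (measurable_truncationWeight hf hA) (truncationWeight_nonneg hHsupp)
    (truncationWeight_nonneg hAsupp) ?_ ?_ ?_
  · rw [lintegral_truncationWeight_withDensity hf hZpos hH hHsupp hH0 hHfin,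
      lintegral_truncationWeight_withDensity hf hZpos hA hAsupp hApos.ne' hAfin.ne]
  · rw [lintegral_truncationWeight_withDensity hf hZpos hH hHsupp hH0 hHfin]
    exact ENNReal.ofReal_ne_top
  · rw [lintegral_truncationWeight_sq_withDensity hf hZpos hH hHsupp hH0 hHfin,
      lintegral_truncationWeight_sq_withDensity hf hZpos hA hAsupp hApos.ne' hAfin.ne]
    gcongr

/-- Optimality of HPD truncation (Theorem 1): assume `π(θ)L(θ)` is continuous on its
support and non-constant in the sense that every level set `{θ : π(θ)L(θ) = q}`,
`q > 0`, has Lebesgue measure zero. If `θ⁽¹⁾,…,θ⁽ᴹ⁾` are i.i.d. draws from the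
posterior, then for every measurable set `A` of finite nonzero volume contained in the
posterior support there exists `α ∈ (0,1]` (with associated quantile `q_α` for which the
posterior probability of `H_α = {θ : π(θ)L(θ) > q_α}` equals `α`) such that the variance
of the truncated harmonic mean estimator with truncation set `H_α` is less than or equal
to the variance of the truncated harmonic mean estimator with truncation set `A`. -/
theorem thames_hpd_truncation_optimal
    {R : ℕ} (prior L : (Fin R → ℝ) → ℝ)
    (hprior : Measurable prior) (hL : Measurable L)
    (hpriornn : ∀ θ, 0 ≤ prior θ) (hLnn : ∀ θ, 0 ≤ L θ)
    (Z : ℝ) (hZ : Z = ∫ θ, prior θ * L θ) (hZpos : 0 < Z)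
    (hcont : ContinuousOn (fun θ => prior θ * L θ) {θ | 0 < prior θ * L θ})
    (hlevel : ∀ q : ℝ, 0 < q → volume {θ | prior θ * L θ = q} = 0)
    (A : Set (Fin R → ℝ)) (hA : MeasurableSet A)
    (hApos : 0 < volume A) (hAfin : volume A < ⊤)
    (hAsupp : A ⊆ {θ | 0 < prior θ * L θ})
    {Ω : Type} [MeasureSpace Ω] [IsProbabilityMeasure (ℙ : Measure Ω)]
    (M : ℕ) (hM : 0 < M)
    (X : Fin M → Ω → (Fin R → ℝ))
    (hXmeas : ∀ t, Measurable (X t))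
    (hXdist : ∀ t, Measure.map (X t) ℙ =
      volume.withDensity (fun θ => ENNReal.ofReal (prior θ * L θ / Z)))
    (hXindep : iIndepFun X ℙ) :
    ∃ α ∈ Set.Ioc (0 : ℝ) 1, ∃ qα : ℝ, 0 < qα ∧
      (volume.withDensity (fun θ => ENNReal.ofReal (prior θ * L θ / Z)))
          {θ | qα < prior θ * L θ} = ENNReal.ofReal α ∧
      evariance (fun ω => (1 / (M : ℝ)) * ∑ t : Fin M,
          ({θ | qα < prior θ * L θ}).indicator (fun _ => (1 : ℝ)) (X t ω) /
            ((volume {θ | qα < prior θ * L θ}).toReal * (prior (X t ω) * L (X t ω)))) ℙ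
        ≤ evariance (fun ω => (1 / (M : ℝ)) * ∑ t : Fin M,
            A.indicator (fun _ => (1 : ℝ)) (X t ω) /
              ((volume A).toReal * (prior (X t ω) * L (X t ω)))) ℙ :=
  thames_hpd_truncation_optimal_general prior L hprior hL Z hZpos hlevel A hA hApos hAfin hAsupp M
    hM X hXmeas hXdist hXindep
end

section
/- Regularity of the HPD volume: assume π(θ)L(θ) is continuous on its support and every level set {θ : π(θ)L(θ) = q}, q > 0, has Lebesgue measure zero, and for α ∈ (0,1) let H_α = {θ : π(θ)L(θ) > q_α} where q_α is the unique constant with posterior probability of H_α equal to α. Then the map α ↦ V(H_α) is strictly increasing and continuous on (0,1). -/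
/-!
Write `f = π L`, `S α = {f > q_α}` and `V α = V(S α)`. Since the posterior mass of `S α` is `α`,
the thresholds `q_α` decrease strictly, so the sets `S α` increase and for `α < β` the shell
`S β \ S α` has posterior mass `β - α`. The posterior is absolutely continuous with respect to
Lebesgue measure, so the shell has positive volume: `V` is strictly increasing. On the shell the
posterior density exceeds `q_β / Z`, so its volume is at most `Z (β - α) / q_β`; as `q` is
bounded below by `q_b > 0` on `(0, b)`, `V` is Lipschitz there, hence continuous.
-/

open Set
open scoped ENNReal

namespace MeasureTheory

variable {X : Type*} [MeasurableSpace X] {μ : Measure X}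

theorem mul_measure_le_withDensity {d : X → ℝ≥0∞} {c : ℝ≥0∞} {s : Set X} (hs : MeasurableSet s)
    (hc : ∀ x ∈ s, c ≤ d x) : c * μ s ≤ μ.withDensity d s :=
  calc c * μ s = ∫⁻ _ in s, c ∂μ := (setLIntegral_const s c).symm
    _ ≤ ∫⁻ x in s, d x ∂μ := setLIntegral_mono' hs hc
    _ ≤ μ.withDensity d s := withDensity_apply_le d s

/-- The posterior `P(·|D)` with unnormalised density `f` and normalising constant `Z`. -/
noncomputable def posteriorMeasure (μ : Measure X) (f : X → ℝ) (Z : ℝ) : Measure X :=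
  μ.withDensity fun x => ENNReal.ofReal (f x / Z)

theorem posteriorMeasure_absolutelyContinuous {f : X → ℝ} {Z : ℝ} :
    posteriorMeasure μ f Z ≪ μ :=
  withDensity_absolutelyContinuous μ _

theorem measure_le_mul_posteriorMeasure {f : X → ℝ} {Z q : ℝ} (hZ : 0 < Z) (hq : 0 < q)
    {s : Set X} (hs : MeasurableSet s) (hsf : s ⊆ {x | q < f x}) :
    μ s ≤ ENNReal.ofReal (Z / q) * posteriorMeasure μ f Z s := by
  have hlow : ENNReal.ofReal (q / Z) * μ s ≤ posteriorMeasure μ f Z s :=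
    mul_measure_le_withDensity hs fun x hx =>
      ENNReal.ofReal_le_ofReal (div_le_div_of_nonneg_right (hsf hx).le hZ.le)
  calc μ s = ENNReal.ofReal (Z / q) * (ENNReal.ofReal (q / Z) * μ s) := by
        rw [← mul_assoc, ← ENNReal.ofReal_mul (by positivity),
          div_mul_div_cancel₀ hq.ne', div_self hZ.ne', ENNReal.ofReal_one, one_mul]
    _ ≤ ENNReal.ofReal (Z / q) * posteriorMeasure μ f Z s := by gcongr

/-- `t α` is the threshold `q_α` of the highest posterior density set `H_α = {t α < f}` of
`ν`-mass `α`. -/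
def IsHPDThreshold (ν : Measure X) (f : X → ℝ) (t : ℝ → ℝ) : Prop :=
  ∀ α ∈ Ioo (0 : ℝ) 1, 0 < t α ∧ ν {x | t α < f x} = ENNReal.ofReal α

namespace IsHPDThreshold

variable {ν : Measure X} {f : X → ℝ} {t : ℝ → ℝ} {α β : ℝ}

theorem strictAntiOn (ht : IsHPDThreshold ν f t) : StrictAntiOn t (Ioo 0 1) := by
  intro α hα β hβ hαβ
  by_contra! hle
  have hmono : ν {x | t β < f x} ≤ ν {x | t α < f x} :=
    measure_mono fun _ hx => hle.trans_lt hx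
  rw [(ht α hα).2, (ht β hβ).2, ENNReal.ofReal_le_ofReal_iff hα.1.le] at hmono
  linarith

theorem superlevel_subset (ht : IsHPDThreshold ν f t) (hα : α ∈ Ioo 0 1) (hβ : β ∈ Ioo 0 1)
    (hαβ : α < β) : {x | t α < f x} ⊆ {x | t β < f x} :=
  fun _ hx => (ht.strictAntiOn hα hβ hαβ).trans hx

theorem measure_superlevel_sdiff (ht : IsHPDThreshold ν f t) (hf : Measurable f)
    (hα : α ∈ Ioo 0 1) (hβ : β ∈ Ioo 0 1) (hαβ : α < β) :
    ν ({x | t β < f x} \ {x | t α < f x}) = ENNReal.ofReal (β - α) := by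
  rw [measure_sdiff (ht.superlevel_subset hα hβ hαβ)
    (measurableSet_lt measurable_const hf).nullMeasurableSet (by simp [(ht α hα).2]),
    (ht α hα).2, (ht β hβ).2, ENNReal.ofReal_sub _ hα.1.le]

section Posterior

variable {Z : ℝ} (ht : IsHPDThreshold (posteriorMeasure μ f Z) f t) (hf : Measurable f)
  (hZ : 0 < Z)
include ht hf hZ

theorem measure_superlevel_ne_top (hα : α ∈ Ioo 0 1) : μ {x | t α < f x} ≠ ∞ :=
  ne_top_of_le_ne_top (by simp [(ht α hα).2, ENNReal.mul_eq_top])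
    (measure_le_mul_posteriorMeasure hZ (ht α hα).1 (measurableSet_lt measurable_const hf)
      subset_rfl)

theorem measureReal_superlevel_sub (hα : α ∈ Ioo 0 1) (hβ : β ∈ Ioo 0 1) (hαβ : α < β) :
    μ.real {x | t β < f x} - μ.real {x | t α < f x} =
      μ.real ({x | t β < f x} \ {x | t α < f x}) :=
  (measureReal_sdiff (ht.superlevel_subset hα hβ hαβ) (measurableSet_lt measurable_const hf)
    (ht.measure_superlevel_ne_top hf hZ hβ)).symm

theorem measureReal_superlevel_sdiff_pos (hα : α ∈ Ioo 0 1) (hβ : β ∈ Ioo 0 1) (hαβ : α < β) :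
    0 < μ.real ({x | t β < f x} \ {x | t α < f x}) := by
  refine ENNReal.toReal_pos (fun hzero => ?_)
    (measure_ne_top_of_subset sdiff_subset (ht.measure_superlevel_ne_top hf hZ hβ))
  have hpost := posteriorMeasure_absolutelyContinuous (f := f) (Z := Z) hzero
  rw [ht.measure_superlevel_sdiff hf hα hβ hαβ, ENNReal.ofReal_eq_zero] at hpost
  linarith

theorem measureReal_superlevel_sdiff_le (hα : α ∈ Ioo 0 1) (hβ : β ∈ Ioo 0 1) (hαβ : α < β) :
    μ.real ({x | t β < f x} \ {x | t α < f x}) ≤ Z / t β * (β - α) := by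
  have hle := measure_le_mul_posteriorMeasure (μ := μ) hZ (ht β hβ).1
    (s := {x | t β < f x} \ {x | t α < f x})
    ((measurableSet_lt measurable_const hf).diff (measurableSet_lt measurable_const hf))
    sdiff_subset
  rw [ht.measure_superlevel_sdiff hf hα hβ hαβ,
    ← ENNReal.ofReal_mul (by positivity [(ht β hβ).1])] at hle
  have hnonneg : 0 ≤ Z / t β * (β - α) := by positivity [(ht β hβ).1, sub_pos.2 hαβ]
  exact (ENNReal.toReal_mono ENNReal.ofReal_ne_top hle).trans_eq (ENNReal.toReal_ofReal hnonneg)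

theorem strictMonoOn_measureReal_superlevel :
    StrictMonoOn (fun α => μ.real {x | t α < f x}) (Ioo 0 1) := fun α hα β hβ hαβ => by
  have hpos := ht.measureReal_superlevel_sdiff_pos hf hZ hα hβ hαβ
  rw [← ht.measureReal_superlevel_sub hf hZ hα hβ hαβ] at hpos
  exact sub_pos.1 hpos

theorem lipschitzOnWith_measureReal_superlevel {b : ℝ} (hb : b ∈ Ioo 0 1) :
    LipschitzOnWith (Z / t b).toNNReal (fun α => μ.real {x | t α < f x}) (Ioo 0 b) := by
  have hsub : Ioo 0 b ⊆ Ioo (0 : ℝ) 1 := Ioo_subset_Ioo_right hb.2.le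
  refine LipschitzOnWith.of_le_add_mul' _ fun α hα β hβ => ?_
  rcases le_or_gt α β with hαβ | hβα
  · have hmono :=
      (ht.strictMonoOn_measureReal_superlevel hf hZ).monotoneOn (hsub hα) (hsub hβ) hαβ
    have : 0 ≤ Z / t b * dist α β := by positivity [(ht b hb).1]
    linarith
  · have hdiff := ht.measureReal_superlevel_sub hf hZ (hsub hβ) (hsub hα) hβα
    have hle := ht.measureReal_superlevel_sdiff_le hf hZ (hsub hβ) (hsub hα) hβα
    have htb : t b ≤ t α := (ht.strictAntiOn (hsub hα) hb hα.2).le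
    have hK : Z / t α ≤ Z / t b := div_le_div_of_nonneg_left hZ.le (ht b hb).1 htb
    have hKmul := mul_le_mul_of_nonneg_right hK (sub_pos.2 hβα).le
    rw [Real.dist_eq, abs_of_pos (sub_pos.2 hβα)]
    linarith

theorem continuousOn_measureReal_superlevel :
    ContinuousOn (fun α => μ.real {x | t α < f x}) (Ioo 0 1) := fun α hα => by
  have hb : (α + 1) / 2 ∈ Ioo (0 : ℝ) 1 := ⟨by linarith [hα.1], by linarith [hα.2]⟩
  have hnhds : Ioo 0 ((α + 1) / 2) ∈ nhds α := isOpen_Ioo.mem_nhds ⟨hα.1, by linarith [hα.2]⟩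
  exact ((ht.lipschitzOnWith_measureReal_superlevel hf hZ hb).continuousOn.continuousAt
    hnhds).continuousWithinAt

end Posterior

end IsHPDThreshold

end MeasureTheory

open MeasureTheory

theorem hpd_volume_strictMono_continuous_general
    {R : ℕ} (prior L : (Fin R → ℝ) → ℝ)
    (hprior : Measurable prior) (hL : Measurable L)
    (Z : ℝ) (hZpos : 0 < Z)
    (qα : ℝ → ℝ)
    (hqα : ∀ α ∈ Set.Ioo (0 : ℝ) 1, 0 < qα α ∧
      (volume.withDensity (fun θ => ENNReal.ofReal (prior θ * L θ / Z)))
          {θ | qα α < prior θ * L θ} = ENNReal.ofReal α) :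
    StrictMonoOn (fun α => (volume {θ | qα α < prior θ * L θ}).toReal)
        (Set.Ioo (0 : ℝ) 1) ∧
    ContinuousOn (fun α => (volume {θ | qα α < prior θ * L θ}).toReal)
        (Set.Ioo (0 : ℝ) 1) := by
  have ht : IsHPDThreshold (posteriorMeasure volume (fun θ => prior θ * L θ) Z)
      (fun θ => prior θ * L θ) qα := hqα
  have hf : Measurable fun θ => prior θ * L θ := hprior.mul hL
  exact ⟨ht.strictMonoOn_measureReal_superlevel hf hZpos,
    ht.continuousOn_measureReal_superlevel hf hZpos⟩

/-- Regularity of the HPD volume: assume `π(θ)L(θ)` is continuous on its support and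
every level set `{θ : π(θ)L(θ) = q}`, `q > 0`, has Lebesgue measure zero, and for
`α ∈ (0,1)` let `H_α = {θ : π(θ)L(θ) > q_α}` where `q_α` is the unique constant with
posterior probability of `H_α` equal to `α`. Then the map `α ↦ V(H_α)` is strictly
increasing and continuous on `(0,1)`. -/
theorem hpd_volume_strictMono_continuous
    {R : ℕ} (prior L : (Fin R → ℝ) → ℝ)
    (hprior : Measurable prior) (hL : Measurable L)
    (hpriornn : ∀ θ, 0 ≤ prior θ) (hLnn : ∀ θ, 0 ≤ L θ)
    (Z : ℝ) (hZ : Z = ∫ θ, prior θ * L θ) (hZpos : 0 < Z)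
    (hcont : ContinuousOn (fun θ => prior θ * L θ) {θ | 0 < prior θ * L θ})
    (hlevel : ∀ q : ℝ, 0 < q → volume {θ | prior θ * L θ = q} = 0)
    (qα : ℝ → ℝ)
    (hqα : ∀ α ∈ Set.Ioo (0 : ℝ) 1, 0 < qα α ∧
      (volume.withDensity (fun θ => ENNReal.ofReal (prior θ * L θ / Z)))
          {θ | qα α < prior θ * L θ} = ENNReal.ofReal α) :
    StrictMonoOn (fun α => (volume {θ | qα α < prior θ * L θ}).toReal)
        (Set.Ioo (0 : ℝ) 1) ∧
    ContinuousOn (fun α => (volume {θ | qα α < prior θ * L θ}).toReal)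
        (Set.Ioo (0 : ℝ) 1) :=
  hpd_volume_strictMono_continuous_general prior L hprior hL Z hZpos qα hqα
end

section
/- Variance upper bound for convex combinations of truncated harmonic mean estimators: let θ^(1),…,θ^(M) be i.i.d. draws from the posterior with density p = πL/Z, let A_1,…,A_K be measurable sets of finite nonzero volume contained in the posterior support, let ω_1,…,ω_K ≥ 0 with Σ_k ω_k = 1, and set Ẑ_Mix^{-1} = Σ_{k=1}^{K} ω_k (1/M) Σ_{t : θ^(t) ∈ A_k} 1/(V(A_k) π(θ^(t)) L(θ^(t))). Then Var[Ẑ_Mix^{-1}] ≤ (K Z^{-2}/M) Σ_{k=1}^{K} ω_k² ∫_{A_k} (1/V(A_k)²) / p(θ) dθ − Z^{-2}/M. -/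
open MeasureTheory ProbabilityTheory

open scoped ENNReal

/-!
Swapping the two sums writes the estimator as the sample mean of `g(θ⁽ᵗ⁾)` with
`g = ∑ₖ ωₖ fₖ`, `fₖ = 1_{Aₖ} / (V(Aₖ) π L)`. On `Aₖ` the posterior density `π L / Z` cancels
the denominator of `fₖ`, so `E[fₖ] = 1/Z` and `E[fₖ²] = Z⁻² ∫_{Aₖ} V(Aₖ)⁻² / p`; as the
weights sum to one, `E[g] = 1/Z`. For i.i.d. draws `Var[mean] = (E[g²] - E[g]²) / M`, and
the pointwise Cauchy–Schwarz bound `(∑ₖ ωₖ fₖ)² ≤ K ∑ₖ ωₖ² fₖ²` controls `E[g²]`.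
-/

lemma lintegral_ofReal_sq_sum_le {E ι : Type*} [MeasurableSpace E] [Fintype ι] {μ : Measure E}
    {h : ι → E → ℝ} (hh : ∀ i, Measurable (h i)) :
    ∫⁻ θ, ENNReal.ofReal ((∑ i, h i θ) ^ 2) ∂μ ≤
      Fintype.card ι * ∑ i, ∫⁻ θ, ENNReal.ofReal (h i θ ^ 2) ∂μ := by
  rw [← lintegral_finsetSum _ fun i _ => ((hh i).pow_const 2).ennreal_ofReal,
    ← lintegral_const_mul' _ _ (ENNReal.natCast_ne_top _)]
  refine lintegral_mono fun θ => ?_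
  rw [← ENNReal.ofReal_sum_of_nonneg fun i _ => sq_nonneg _, ← ENNReal.ofReal_natCast,
    ← ENNReal.ofReal_mul (Nat.cast_nonneg _)]
  exact ENNReal.ofReal_le_ofReal (sq_sum_le_card_mul_sum_sq ..)

lemma variance_mean_of_iIndepFun {Ω : Type*} [MeasurableSpace Ω] {μ : Measure Ω} {M : ℕ}
    {Y : Fin M → Ω → ℝ} (hY : ∀ t, MemLp (Y t) 2 μ) (hindep : iIndepFun Y μ) {v : ℝ}
    (hv : ∀ t, Var[Y t; μ] = v) :
    Var[fun ω => (1 / M : ℝ) * ∑ t, Y t ω; μ] = v / M := by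
  have hsum : (fun ω => ∑ t, Y t ω) = ∑ t, Y t := by ext ω; simp
  rw [variance_const_mul, hsum, IndepFun.variance_sum (fun t _ => hY t)
    fun s _ t _ hst => hindep.indepFun hst]
  simp only [hv, Finset.sum_const, Finset.card_univ, Fintype.card_fin, nsmul_eq_mul]
  rcases eq_or_ne (M : ℝ) 0 with hM | hM
  · simp [hM]
  · field_simp

lemma evariance_mean_add_le {Ω : Type*} [MeasureSpace Ω] [IsProbabilityMeasure (ℙ : Measure Ω)]
    {M : ℕ} {Y : Fin M → Ω → ℝ} (hY : ∀ t, Measurable (Y t))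
    (hindep : iIndepFun Y) {m : ℝ} (hm : ∀ t, 𝔼[Y t] = m) {s : ℝ≥0∞}
    (hs : ∀ t, ∫⁻ ω, ENNReal.ofReal (Y t ω ^ 2) = s) :
    eVar[fun ω => (1 / M : ℝ) * ∑ t, Y t ω] + ENNReal.ofReal (m ^ 2 / M) ≤
      ENNReal.ofReal (1 / M) * s := by
  rcases Nat.eq_zero_or_pos M with rfl | hM
  · simp [evariance]
  rcases eq_or_ne s ∞ with rfl | hs_top
  · rw [ENNReal.mul_top (by simp [hM])]
    exact le_top
  have hsq_nn : ∀ t, 0 ≤ᵐ[ℙ] fun ω => Y t ω ^ 2 := fun t => .of_forall fun ω => sq_nonneg _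
  have hL2 : ∀ t, MemLp (Y t) 2 := fun t =>
    (memLp_two_iff_integrable_sq (hY t).aestronglyMeasurable).2
      ((lintegral_ofReal_ne_top_iff_integrable ((hY t).pow_const 2).aestronglyMeasurable
        (hsq_nn t)).1 (hs t ▸ hs_top))
  have hvar : ∀ t, Var[Y t] = s.toReal - m ^ 2 := fun t => by
    rw [variance_eq_sub (hL2 t), hm t, Pi.pow_def, integral_eq_lintegral_of_nonneg_ae (hsq_nn t)
      ((hY t).pow_const 2).aestronglyMeasurable, hs t]
  have hmean_L2 : MemLp (fun ω => (1 / M : ℝ) * ∑ t, Y t ω) 2 :=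
    (memLp_finsetSum _ fun t _ => hL2 t).const_mul _
  have hvar_mean := variance_mean_of_iIndepFun hL2 hindep hvar
  rw [← hmean_L2.ofReal_variance_eq, hvar_mean,
    ← ENNReal.ofReal_add (hvar_mean ▸ variance_nonneg _ _) (by positivity)]
  conv_rhs => rw [← ENNReal.ofReal_toReal hs_top, ← ENNReal.ofReal_mul (by positivity)]
  exact le_of_eq (congrArg _ (by ring))

lemma evariance_mean_comp_add_le {Ω E : Type*} [MeasureSpace Ω]
    [IsProbabilityMeasure (ℙ : Measure Ω)] [MeasurableSpace E] {μ : Measure E} {M : ℕ}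
    {X : Fin M → Ω → E} (hX : ∀ t, Measurable (X t)) (hXμ : ∀ t, Measure.map (X t) ℙ = μ)
    (hindep : iIndepFun X) {g : E → ℝ} (hg : Measurable g) :
    eVar[fun ω => (1 / M : ℝ) * ∑ t, g (X t ω)] + ENNReal.ofReal ((∫ θ, g θ ∂μ) ^ 2 / M) ≤
      ENNReal.ofReal (1 / M) * ∫⁻ θ, ENNReal.ofReal (g θ ^ 2) ∂μ :=
  evariance_mean_add_le (fun t => hg.comp (hX t)) (hindep.comp (fun _ => g) fun _ => hg)
    (fun t => by rw [← hXμ t, integral_map (hX t).aemeasurable hg.aestronglyMeasurable]; rfl)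
    (fun t => by rw [← hXμ t, lintegral_map (hg.pow_const 2).ennreal_ofReal (hX t)]; rfl)

namespace Thames

variable {E : Type*} [MeasurableSpace E] {μ : Measure E} {q : E → ℝ} {Z : ℝ} {A : Set E}

noncomputable def posterior (μ : Measure E) (q : E → ℝ) (Z : ℝ) : Measure E :=
  μ.withDensity fun θ => ENNReal.ofReal (q θ / Z)

noncomputable def truncatedHarmonicTerm (μ : Measure E) (q : E → ℝ) (A : Set E) (θ : E) : ℝ :=
  A.indicator (fun _ => (1 : ℝ)) θ / ((μ A).toReal * q θ)

lemma truncatedHarmonicTerm_of_mem {θ : E} (h : θ ∈ A) :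
    truncatedHarmonicTerm μ q A θ = ((μ A).toReal * q θ)⁻¹ := by
  simp [truncatedHarmonicTerm, h]

lemma truncatedHarmonicTerm_of_notMem {θ : E} (h : θ ∉ A) :
    truncatedHarmonicTerm μ q A θ = 0 := by
  simp [truncatedHarmonicTerm, h]

lemma truncatedHarmonicTerm_nonneg (hAq : A ⊆ {θ | 0 < q θ}) (θ : E) :
    0 ≤ truncatedHarmonicTerm μ q A θ := by
  by_cases h : θ ∈ A
  · rw [truncatedHarmonicTerm_of_mem h]
    exact inv_nonneg.2 (mul_nonneg ENNReal.toReal_nonneg (hAq h).le)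
  · rw [truncatedHarmonicTerm_of_notMem h]

lemma measurable_truncatedHarmonicTerm (hq : Measurable q) (hA : MeasurableSet A) :
    Measurable (truncatedHarmonicTerm μ q A) :=
  (measurable_const.indicator hA).div (measurable_const.mul hq)

lemma lintegral_posterior_of_support_subset (hq : Measurable q) (hA : MeasurableSet A)
    {φ : E → ℝ≥0∞} (hφ : Measurable φ) (hφA : ∀ θ ∉ A, φ θ = 0) :
    ∫⁻ θ, φ θ ∂posterior μ q Z = ∫⁻ θ in A, ENNReal.ofReal (q θ / Z) * φ θ ∂μ := by
  rw [← setLIntegral_eq_of_support_subset (Function.support_subset_iff'.2 hφA),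
    posterior, setLIntegral_withDensity_eq_setLIntegral_mul _ (hq.div_const Z).ennreal_ofReal hφ hA]
  rfl

lemma lintegral_truncatedHarmonicTerm (hq : Measurable q) (hA : MeasurableSet A)
    (hA₀ : μ A ≠ 0) (hA_top : μ A ≠ ∞) (hAq : A ⊆ {θ | 0 < q θ}) (hZ : 0 < Z) :
    ∫⁻ θ, ENNReal.ofReal (truncatedHarmonicTerm μ q A θ) ∂posterior μ q Z =
      ENNReal.ofReal Z⁻¹ := by
  have hV : 0 < (μ A).toReal := ENNReal.toReal_pos hA₀ hA_top
  rw [lintegral_posterior_of_support_subset hq hA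
      (measurable_truncatedHarmonicTerm hq hA).ennreal_ofReal
      fun θ hθ => by simp [truncatedHarmonicTerm_of_notMem hθ],
    setLIntegral_congr_fun hA (g := fun _ => ENNReal.ofReal ((μ A).toReal * Z)⁻¹) ?_,
    setLIntegral_const]
  · nth_rw 2 [← ENNReal.ofReal_toReal hA_top]
    rw [← ENNReal.ofReal_mul (by positivity)]
    congr 1
    field_simp
  · intro θ hθ
    have hqθ : 0 < q θ := hAq hθ
    dsimp only
    rw [← ENNReal.ofReal_mul (by positivity), truncatedHarmonicTerm_of_mem hθ]
    congr 1
    field_simp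

lemma lintegral_truncatedHarmonicTerm_sq (hq : Measurable q) (hA : MeasurableSet A)
    (hAq : A ⊆ {θ | 0 < q θ}) (hZ : 0 < Z) :
    ∫⁻ θ, ENNReal.ofReal (truncatedHarmonicTerm μ q A θ ^ 2) ∂posterior μ q Z =
      ENNReal.ofReal (Z⁻¹ ^ 2) *
        ∫⁻ θ in A, ENNReal.ofReal ((1 / (μ A).toReal ^ 2) / (q θ / Z)) ∂μ := by
  rw [lintegral_posterior_of_support_subset hq hA
      ((measurable_truncatedHarmonicTerm hq hA).pow_const 2).ennreal_ofReal
      fun θ hθ => by simp [truncatedHarmonicTerm_of_notMem hθ],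
    ← lintegral_const_mul' _ _ ENNReal.ofReal_ne_top]
  refine setLIntegral_congr_fun hA fun θ hθ => ?_
  have hqθ : 0 < q θ := hAq hθ
  rw [← ENNReal.ofReal_mul (by positivity), ← ENNReal.ofReal_mul (by positivity),
    truncatedHarmonicTerm_of_mem hθ]
  congr 1
  field_simp

lemma integral_truncatedHarmonicTerm (hq : Measurable q) (hA : MeasurableSet A)
    (hA₀ : μ A ≠ 0) (hA_top : μ A ≠ ∞) (hAq : A ⊆ {θ | 0 < q θ}) (hZ : 0 < Z) :
    Integrable (truncatedHarmonicTerm μ q A) (posterior μ q Z) ∧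
      ∫ θ, truncatedHarmonicTerm μ q A θ ∂posterior μ q Z = Z⁻¹ := by
  have hm := measurable_truncatedHarmonicTerm (μ := μ) hq hA
  have hnn : 0 ≤ᵐ[posterior μ q Z] truncatedHarmonicTerm μ q A :=
    .of_forall (truncatedHarmonicTerm_nonneg hAq)
  have hlint := lintegral_truncatedHarmonicTerm hq hA hA₀ hA_top hAq hZ
  refine ⟨(lintegral_ofReal_ne_top_iff_integrable hm.aestronglyMeasurable hnn).1 ?_, ?_⟩
  · simp [hlint]
  · rw [integral_eq_lintegral_of_nonneg_ae hnn hm.aestronglyMeasurable, hlint,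
      ENNReal.toReal_ofReal (inv_nonneg.2 hZ.le)]

lemma integral_sum_mul_truncatedHarmonicTerm {ι : Type*} [Fintype ι] {A : ι → Set E}
    (hq : Measurable q) (hA : ∀ k, MeasurableSet (A k)) (hA₀ : ∀ k, μ (A k) ≠ 0)
    (hA_top : ∀ k, μ (A k) ≠ ∞) (hAq : ∀ k, A k ⊆ {θ | 0 < q θ}) (hZ : 0 < Z)
    {w : ι → ℝ} (hw : ∑ k, w k = 1) :
    ∫ θ, ∑ k, w k * truncatedHarmonicTerm μ q (A k) θ ∂posterior μ q Z = Z⁻¹ := by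
  have h k := integral_truncatedHarmonicTerm hq (hA k) (hA₀ k) (hA_top k) (hAq k) hZ
  rw [integral_finsetSum _ fun k _ => (h k).1.const_mul _]
  simp_rw [integral_const_mul, (h _).2, ← Finset.sum_mul, hw, one_mul]

end Thames

open Thames

theorem thames_mixture_variance_upper_bound_general
    {R : ℕ} (prior L : (Fin R → ℝ) → ℝ)
    (hprior : Measurable prior) (hL : Measurable L)
    (Z : ℝ) (hZpos : 0 < Z)
    (K : ℕ)
    (A : Fin K → Set (Fin R → ℝ)) (hA : ∀ k, MeasurableSet (A k))
    (hApos : ∀ k, 0 < volume (A k)) (hAfin : ∀ k, volume (A k) < ⊤)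
    (hAsupp : ∀ k, A k ⊆ {θ | 0 < prior θ * L θ})
    (w : Fin K → ℝ) (hwsum : ∑ k, w k = 1)
    {Ω : Type} [MeasureSpace Ω] [IsProbabilityMeasure (ℙ : Measure Ω)]
    (M : ℕ)
    (X : Fin M → Ω → (Fin R → ℝ))
    (hXmeas : ∀ t, Measurable (X t))
    (hXdist : ∀ t, Measure.map (X t) ℙ =
      volume.withDensity (fun θ => ENNReal.ofReal (prior θ * L θ / Z)))
    (hXindep : iIndepFun (m := fun _ : Fin M => (inferInstance : MeasurableSpace (Fin R → ℝ))) X ℙ) :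
    evariance (fun ω => ∑ k : Fin K, w k * ((1 / (M : ℝ)) * ∑ t : Fin M,
        (A k).indicator (fun _ => (1 : ℝ)) (X t ω) /
          ((volume (A k)).toReal * (prior (X t ω) * L (X t ω))))) ℙ
      + ENNReal.ofReal (Z⁻¹ ^ 2 / M)
    ≤ ENNReal.ofReal ((K : ℝ) * Z⁻¹ ^ 2 / M) *
        ∑ k : Fin K, ENNReal.ofReal (w k ^ 2) *
          ∫⁻ θ in A k, ENNReal.ofReal
            ((1 / (volume (A k)).toReal ^ 2) / (prior θ * L θ / Z)) := by
  have hq : Measurable fun θ => prior θ * L θ := hprior.mul hL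
  set ν := posterior volume (fun θ => prior θ * L θ) Z
  set f := fun k => truncatedHarmonicTerm volume (fun θ => prior θ * L θ) (A k)
  have hf k : Measurable (f k) := measurable_truncatedHarmonicTerm hq (hA k)
  have hestimator : (fun ω => ∑ k, w k * ((1 / (M : ℝ)) * ∑ t, f k (X t ω))) =
      fun ω => (1 / (M : ℝ)) * ∑ t, ∑ k, w k * f k (X t ω) := by
    ext ω
    simp only [Finset.mul_sum, mul_left_comm (w _)]
    exact Finset.sum_comm
  have hmean : ∫ θ, ∑ k, w k * f k θ ∂ν = Z⁻¹ :=
    integral_sum_mul_truncatedHarmonicTerm hq hA (fun k => (hApos k).ne')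
      (fun k => (hAfin k).ne) hAsupp hZpos hwsum
  have hbound := evariance_mean_comp_add_le (μ := ν) hXmeas hXdist hXindep
    (Finset.measurable_sum Finset.univ fun k _ => (hf k).const_mul (w k))
  rw [hmean] at hbound
  refine (hestimator ▸ hbound).trans ?_
  calc _ ≤ ENNReal.ofReal (1 / M) *
        (K * ∑ k, ∫⁻ θ, ENNReal.ofReal ((w k * f k θ) ^ 2) ∂ν) := by
        gcongr
        simpa using lintegral_ofReal_sq_sum_le fun k => (hf k).const_mul (w k)
    _ = _ := by
        simp only [ν, f, mul_pow, ENNReal.ofReal_mul (sq_nonneg _),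
          lintegral_const_mul' _ _ ENNReal.ofReal_ne_top,
          lintegral_truncatedHarmonicTerm_sq hq (hA _) (hAsupp _) hZpos]
        rw [show (K : ℝ) * Z⁻¹ ^ 2 / M = 1 / M * K * Z⁻¹ ^ 2 by ring,
          ENNReal.ofReal_mul (by positivity), ENNReal.ofReal_mul (by positivity),
          ENNReal.ofReal_natCast, Finset.mul_sum, Finset.mul_sum, Finset.mul_sum]
        exact Finset.sum_congr rfl fun k _ => by ring

/-- Variance upper bound for convex combinations of truncated harmonic mean estimators:
for i.i.d. posterior draws `θ⁽¹⁾,…,θ⁽ᴹ⁾`, measurable sets `A₁,…,A_K` of finite nonzero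
volume contained in the posterior support, and weights `ω_k ≥ 0` summing to `1`,
`Var[Ẑ_Mix⁻¹] ≤ (K Z⁻²/M) ∑ₖ ωₖ² ∫_{Aₖ} (1/V(Aₖ)²)/p(θ) dθ − Z⁻²/M`,
stated on the extended nonnegative reals with the subtracted term moved to the left. -/
theorem thames_mixture_variance_upper_bound
    {R : ℕ} (prior L : (Fin R → ℝ) → ℝ)
    (hprior : Measurable prior) (hL : Measurable L)
    (hpriornn : ∀ θ, 0 ≤ prior θ) (hLnn : ∀ θ, 0 ≤ L θ)
    (Z : ℝ) (hZ : Z = ∫ θ, prior θ * L θ) (hZpos : 0 < Z)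
    (K : ℕ) (hK : 0 < K)
    (A : Fin K → Set (Fin R → ℝ)) (hA : ∀ k, MeasurableSet (A k))
    (hApos : ∀ k, 0 < volume (A k)) (hAfin : ∀ k, volume (A k) < ⊤)
    (hAsupp : ∀ k, A k ⊆ {θ | 0 < prior θ * L θ})
    (w : Fin K → ℝ) (hw : ∀ k, 0 ≤ w k) (hwsum : ∑ k, w k = 1)
    {Ω : Type} [MeasureSpace Ω] [IsProbabilityMeasure (ℙ : Measure Ω)]
    (M : ℕ) (hM : 0 < M)
    (X : Fin M → Ω → (Fin R → ℝ))
    (hXmeas : ∀ t, Measurable (X t))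
    (hXdist : ∀ t, Measure.map (X t) ℙ =
      volume.withDensity (fun θ => ENNReal.ofReal (prior θ * L θ / Z)))
    (hXindep : iIndepFun (m := fun _ : Fin M => (inferInstance : MeasurableSpace (Fin R → ℝ))) X ℙ) :
    evariance (fun ω => ∑ k : Fin K, w k * ((1 / (M : ℝ)) * ∑ t : Fin M,
        (A k).indicator (fun _ => (1 : ℝ)) (X t ω) /
          ((volume (A k)).toReal * (prior (X t ω) * L (X t ω))))) ℙ
      + ENNReal.ofReal (Z⁻¹ ^ 2 / M)
    ≤ ENNReal.ofReal ((K : ℝ) * Z⁻¹ ^ 2 / M) *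
        ∑ k : Fin K, ENNReal.ofReal (w k ^ 2) *
          ∫⁻ θ in A k, ENNReal.ofReal
            ((1 / (volume (A k)).toReal ^ 2) / (prior θ * L θ / Z)) :=
  thames_mixture_variance_upper_bound_general prior L hprior hL Z hZpos K A hA hApos hAfin hAsupp w
    hwsum M X hXmeas hXdist hXindep
end

section
/- Gaussian-mixture variance upper bound (step of Theorem 3): suppose additionally that the posterior density is a Gaussian mixture, p(θ) = Σ_{k=1}^{K} a_k MVN_R(θ; m_k, S_k) with a_k > 0 summing to 1 and S_k positive definite. Then for the convex combination Ẑ_Mix^{-1} of truncated harmonic mean estimators with weights ω_k and sets A_k (each measurable with finite nonzero volume, contained in the posterior support), Var[Ẑ_Mix^{-1}] ≤ (K Z^{-2}/M) Σ_{k=1}^{K} (ω_k²/a_k) ∫_{A_k} (1/V(A_k)²) / MVN_R(θ; m_k, S_k) dθ − Z^{-2}/M, where MVN_R(θ; m, S) denotes the R-dimensional Gaussian density with mean m and covariance S evaluated at θ. -/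
/-!
The estimator `Ẑ_Mix⁻¹` is the sample mean of the i.i.d. variables `Y(θ⁽ᵗ⁾)`, where
`Y = ∑ₖ ωₖ 1_{Aₖ} / (V(Aₖ) π L)`, so `Var[Ẑ_Mix⁻¹] = (E[Y²] - E[Y]²) / M`. As each `Aₖ` lies in
the posterior support, `p Y = Z⁻¹ ∑ₖ ωₖ 1_{Aₖ} / V(Aₖ)` and hence `E[Y] = Z⁻¹`. For `E[Y²]`,
Cauchy–Schwarz gives `Y² ≤ K ∑ₖ (ωₖ 1_{Aₖ} / (V(Aₖ) π L))²`, and the mixture dominates each of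
its components, `π L ≥ Z aₖ MVN(·; mₖ, Sₖ)`.
-/

open MeasureTheory ProbabilityTheory Matrix

/-- The `R`-dimensional Gaussian density with mean `m` and covariance `S`:
`MVN_R(θ; m, S) = (2π)^{−R/2} det(S)^{−1/2} exp(−(θ−m)ᵀS⁻¹(θ−m)/2)`. -/
noncomputable def mvnPdf {R : ℕ} (m : Fin R → ℝ) (S : Matrix (Fin R) (Fin R) ℝ)
    (θ : Fin R → ℝ) : ℝ :=
  (2 * Real.pi) ^ (-(R : ℝ) / 2) * S.det ^ (-(1 : ℝ) / 2) *
    Real.exp (-((θ - m) ⬝ᵥ (S⁻¹ *ᵥ (θ - m))) / 2)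

theorem mvnPdf_pos {R : ℕ} (m : Fin R → ℝ) {S : Matrix (Fin R) (Fin R) ℝ} (hS : S.PosDef)
    (θ : Fin R → ℝ) : 0 < mvnPdf m S θ := by
  have := hS.det_pos
  unfold mvnPdf
  positivity

theorem measurable_mvnPdf {R : ℕ} (m : Fin R → ℝ) (S : Matrix (Fin R) (Fin R) ℝ) :
    Measurable (mvnPdf m S) := by
  unfold mvnPdf
  simp only [dotProduct, mulVec]
  fun_prop

section SampleMean

variable {α Ω : Type*} [MeasurableSpace α] {ν : Measure α} [MeasureSpace Ω] {M : ℕ}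
  {X : Fin M → Ω → α} {Y : α → ℝ}

theorem variance_sampleMean_of_iid (hXmeas : ∀ t, Measurable (X t))
    (hXdist : ∀ t, Measure.map (X t) ℙ = ν) (hXindep : iIndepFun X ℙ) (hY : Measurable Y)
    (hY2 : MemLp Y 2 ν) :
    Var[fun ω => (M : ℝ)⁻¹ * ∑ t, Y (X t ω); ℙ] = Var[Y; ν] / M := by
  have hpres : ∀ t, MeasurePreserving (X t) ℙ ν := fun t => ⟨hXmeas t, hXdist t⟩
  have hmemLp : ∀ t, MemLp (fun ω => Y (X t ω)) 2 ℙ := fun t =>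
    hY2.comp_measurePreserving (hpres t)
  have hpair : Set.Pairwise ↑(Finset.univ : Finset (Fin M))
      fun i j => (fun ω => Y (X i ω)) ⟂ᵢ[ℙ] fun ω => Y (X j ω) :=
    fun i _ j _ hij => (hXindep.indepFun hij).comp hY hY
  have hsum := IndepFun.variance_sum (fun t _ => hmemLp t) hpair
  simp only [Finset.sum_fn] at hsum
  rw [variance_const_mul, hsum]
  simp only [(hpres _).variance_fun_comp hY.aemeasurable, Finset.sum_const, Finset.card_univ,
    Fintype.card_fin, nsmul_eq_mul]
  rcases eq_or_ne (M : ℝ) 0 with hM | hM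
  · simp [hM]
  · field_simp

theorem evariance_sampleMean_add_sq_integral_le [IsProbabilityMeasure (ℙ : Measure Ω)]
    (hM : 0 < M) (hXmeas : ∀ t, Measurable (X t)) (hXdist : ∀ t, Measure.map (X t) ℙ = ν)
    (hXindep : iIndepFun X ℙ) (hY : Measurable Y) :
    evariance (fun ω => (M : ℝ)⁻¹ * ∑ t, Y (X t ω)) ℙ + ENNReal.ofReal ((∫ x, Y x ∂ν) ^ 2 / M)
      ≤ ENNReal.ofReal (M : ℝ)⁻¹ * ∫⁻ x, ENNReal.ofReal (Y x ^ 2) ∂ν := by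
  have : IsProbabilityMeasure ν :=
    hXdist ⟨0, hM⟩ ▸ Measure.isProbabilityMeasure_map (hXmeas _).aemeasurable
  by_cases hY2 : MemLp Y 2 ν
  · have hmean2 : MemLp (fun ω => (M : ℝ)⁻¹ * ∑ t, Y (X t ω)) 2 ℙ :=
      (memLp_finsetSum _ fun t _ =>
        hY2.comp_measurePreserving ⟨hXmeas t, hXdist t⟩).const_mul _
    rw [← hmean2.ofReal_variance_eq, variance_sampleMean_of_iid hXmeas hXdist hXindep hY hY2,
      ← ENNReal.ofReal_add (div_nonneg (variance_nonneg _ _) M.cast_nonneg) (by positivity),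
      ← ofReal_integral_eq_lintegral_ofReal hY2.integrable_sq (.of_forall fun x => sq_nonneg _),
      ← ENNReal.ofReal_mul (by positivity), variance_eq_sub hY2]
    refine ENNReal.ofReal_le_ofReal (le_of_eq ?_)
    simp only [Pi.pow_apply]
    ring
  · have : ∫⁻ x, ENNReal.ofReal (Y x ^ 2) ∂ν = ⊤ := by
      contrapose! hY2
      refine (memLp_two_iff_integrable_sq hY.aestronglyMeasurable).2
        ⟨(hY.pow_const 2).aestronglyMeasurable, ?_⟩
      exact (hasFiniteIntegral_iff_ofReal (.of_forall fun x => sq_nonneg _)).2 hY2.lt_top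
    simp [this, hM]

end SampleMean

section TruncatedHarmonicMean

variable {α ι : Type*} [MeasurableSpace α] (μ : Measure α) {A : Set α} {q : α → ℝ} {Z : ℝ}

/-- The summand `1_A(θ) / (V(A) π(θ) L(θ))` of a truncated harmonic mean estimator,
with `q = π L` and `V = μ`. -/
noncomputable def truncHarmonicTerm (A : Set α) (q : α → ℝ) (θ : α) : ℝ :=
  A.indicator (fun _ => (1 : ℝ)) θ / ((μ A).toReal * q θ)

noncomputable def truncHarmonicMix [Fintype ι] (w : ι → ℝ) (A : ι → Set α) (q : α → ℝ)
    (θ : α) : ℝ :=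
  ∑ k, w k * truncHarmonicTerm μ (A k) q θ

variable {μ}

theorem measurable_truncHarmonicTerm (hA : MeasurableSet A) (hq : Measurable q) :
    Measurable (truncHarmonicTerm μ A q) :=
  (measurable_const.indicator hA).div (measurable_const.mul hq)

theorem measurable_truncHarmonicMix [Fintype ι] {w : ι → ℝ} {A : ι → Set α}
    (hA : ∀ k, MeasurableSet (A k)) (hq : Measurable q) :
    Measurable (truncHarmonicMix μ w A q) :=
  Finset.measurable_sum _ fun k _ => (measurable_truncHarmonicTerm (hA k) hq).const_mul _

theorem div_mul_truncHarmonicTerm (hAq : A ⊆ {θ | 0 < q θ}) (Z : ℝ) (θ : α) :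
    q θ / Z * truncHarmonicTerm μ A q θ = A.indicator (fun _ => (Z * (μ A).toReal)⁻¹) θ := by
  by_cases hθ : θ ∈ A
  · have hq : q θ ≠ 0 := (hAq hθ).ne'
    simp only [truncHarmonicTerm, Set.indicator_of_mem hθ]
    field_simp
  · simp [truncHarmonicTerm, hθ]

theorem integral_truncHarmonicMix_withDensity [Fintype ι] {w : ι → ℝ} {A : ι → Set α}
    (hq : Measurable q) (hq0 : ∀ θ, 0 ≤ q θ) (hZ : 0 ≤ Z) (hA : ∀ k, MeasurableSet (A k))
    (hA0 : ∀ k, μ (A k) ≠ 0) (hAfin : ∀ k, μ (A k) ≠ ⊤) (hAq : ∀ k, A k ⊆ {θ | 0 < q θ}) :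
    ∫ θ, truncHarmonicMix μ w A q θ ∂μ.withDensity (fun θ => ENNReal.ofReal (q θ / Z))
      = (∑ k, w k) / Z := by
  have hdensity : ∀ θ, (q θ / Z).toNNReal • truncHarmonicMix μ w A q θ
      = ∑ k, w k * (A k).indicator (fun _ => (Z * (μ (A k)).toReal)⁻¹) θ := by
    intro θ
    rw [NNReal.smul_def, smul_eq_mul, Real.coe_toNNReal _ (div_nonneg (hq0 θ) hZ),
      truncHarmonicMix, Finset.mul_sum]
    refine Finset.sum_congr rfl fun k _ => ?_
    rw [← div_mul_truncHarmonicTerm (hAq k)]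
    ring
  refine (integral_withDensity_eq_integral_smul (hq.div_const Z).real_toNNReal _).trans ?_
  rw [integral_congr_ae (.of_forall hdensity), integral_finsetSum _ fun k _ =>
    ((integrable_indicator_iff (hA k)).2 (integrableOn_const (hAfin k))).const_mul _,
    Finset.sum_div]
  refine Finset.sum_congr rfl fun k _ => ?_
  rw [integral_const_mul, integral_indicator_const _ (hA k), smul_eq_mul, measureReal_def]
  have hV : (μ (A k)).toReal ≠ 0 := ENNReal.toReal_ne_zero.2 ⟨hA0 k, hAfin k⟩
  field_simp

theorem div_mul_sq_truncHarmonicTerm_le (hAq : A ⊆ {θ | 0 < q θ}) (hZ : 0 < Z) {a w : ℝ}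
    {g : α → ℝ} {θ : α} (ha : 0 < a) (hg : 0 < g θ) (hdom : a * g θ ≤ q θ / Z) :
    q θ / Z * (w * truncHarmonicTerm μ A q θ) ^ 2
      ≤ A.indicator (fun θ => Z⁻¹ ^ 2 * (w ^ 2 / a) * ((1 / (μ A).toReal ^ 2) / g θ)) θ := by
  by_cases hθ : θ ∈ A
  · have hq : 0 < q θ := hAq hθ
    have hZq : Z * (a * g θ) ≤ q θ := by rwa [le_div_iff₀' hZ] at hdom
    simp only [truncHarmonicTerm, Set.indicator_of_mem hθ]
    calc q θ / Z * (w * (1 / ((μ A).toReal * q θ))) ^ 2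
        = Z⁻¹ * (w ^ 2 / (μ A).toReal ^ 2) * (1 / q θ) := by field_simp
      _ ≤ Z⁻¹ * (w ^ 2 / (μ A).toReal ^ 2) * (1 / (Z * (a * g θ))) := by
        gcongr
      _ = Z⁻¹ ^ 2 * (w ^ 2 / a) * ((1 / (μ A).toReal ^ 2) / g θ) := by
        field_simp
  · simp [truncHarmonicTerm, hθ]

end TruncatedHarmonicMean

section TruncatedHarmonicMix

variable {α ι : Type*} [MeasurableSpace α] {μ : Measure α} {q : α → ℝ} {Z : ℝ} [Fintype ι]
  {w a : ι → ℝ} {A : ι → Set α} {g : ι → α → ℝ}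

theorem sum_mul_mean_eq_mean_truncHarmonicMix {M : ℕ} (x : Fin M → α) :
    ∑ k, w k * ((1 / (M : ℝ)) * ∑ t, (A k).indicator (fun _ => (1 : ℝ)) (x t) /
        ((μ (A k)).toReal * q (x t)))
      = (M : ℝ)⁻¹ * ∑ t, truncHarmonicMix μ w A q (x t) := by
  simp only [truncHarmonicMix, truncHarmonicTerm, Finset.mul_sum, one_div]
  rw [Finset.sum_comm]
  exact Finset.sum_congr rfl fun t _ => Finset.sum_congr rfl fun k _ => by ring

theorem div_mul_sq_truncHarmonicMix_le (hq0 : ∀ θ, 0 ≤ q θ) (hZ : 0 < Z)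
    (hAq : ∀ k, A k ⊆ {θ | 0 < q θ}) (ha : ∀ k, 0 < a k) (hg : ∀ k θ, 0 < g k θ)
    (hdom : ∀ k θ, a k * g k θ ≤ q θ / Z) (θ : α) :
    q θ / Z * truncHarmonicMix μ w A q θ ^ 2
      ≤ Fintype.card ι * ∑ k, (A k).indicator
          (fun θ => Z⁻¹ ^ 2 * (w k ^ 2 / a k) * ((1 / (μ (A k)).toReal ^ 2) / g k θ)) θ :=
  calc q θ / Z * truncHarmonicMix μ w A q θ ^ 2
      ≤ q θ / Z * (Fintype.card ι * ∑ k, (w k * truncHarmonicTerm μ (A k) q θ) ^ 2) :=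
        mul_le_mul_of_nonneg_left (sq_sum_le_card_mul_sum_sq ..) (div_nonneg (hq0 θ) hZ.le)
    _ = Fintype.card ι * ∑ k, q θ / Z * (w k * truncHarmonicTerm μ (A k) q θ) ^ 2 := by
        rw [Finset.mul_sum, Finset.mul_sum, Finset.mul_sum]
        exact Finset.sum_congr rfl fun k _ => by ring
    _ ≤ _ := by
        gcongr with k
        exact div_mul_sq_truncHarmonicTerm_le (hAq k) hZ (ha k) (hg k θ) (hdom k θ)

theorem lintegral_sq_truncHarmonicMix_withDensity_le (hq : Measurable q) (hq0 : ∀ θ, 0 ≤ q θ)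
    (hZ : 0 < Z) (hA : ∀ k, MeasurableSet (A k)) (hAq : ∀ k, A k ⊆ {θ | 0 < q θ})
    (hgm : ∀ k, Measurable (g k)) (ha : ∀ k, 0 < a k) (hg : ∀ k θ, 0 < g k θ)
    (hdom : ∀ k θ, a k * g k θ ≤ q θ / Z) :
    ∫⁻ θ, ENNReal.ofReal (truncHarmonicMix μ w A q θ ^ 2)
        ∂μ.withDensity (fun θ => ENNReal.ofReal (q θ / Z))
      ≤ ENNReal.ofReal (Fintype.card ι * Z⁻¹ ^ 2) * ∑ k, ENNReal.ofReal (w k ^ 2 / a k) *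
          ∫⁻ θ in A k, ENNReal.ofReal ((1 / (μ (A k)).toReal ^ 2) / g k θ) ∂μ := by
  have hterm : ∀ k θ, ENNReal.ofReal ((A k).indicator
      (fun θ => Z⁻¹ ^ 2 * (w k ^ 2 / a k) * ((1 / (μ (A k)).toReal ^ 2) / g k θ)) θ)
      = (A k).indicator (fun θ => ENNReal.ofReal (Z⁻¹ ^ 2) * ENNReal.ofReal (w k ^ 2 / a k) *
          ENNReal.ofReal ((1 / (μ (A k)).toReal ^ 2) / g k θ)) θ := by
    intro k θ
    by_cases hθ : θ ∈ A k
    · have := ha k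
      have := hg k θ
      simp only [Set.indicator_of_mem hθ]
      rw [ENNReal.ofReal_mul (by positivity), ENNReal.ofReal_mul (by positivity)]
    · simp [hθ]
  rw [lintegral_withDensity_eq_lintegral_mul _ (hq.div_const Z).ennreal_ofReal
    ((measurable_truncHarmonicMix hA hq).pow_const 2).ennreal_ofReal]
  calc ∫⁻ θ, ENNReal.ofReal (q θ / Z) * ENNReal.ofReal (truncHarmonicMix μ w A q θ ^ 2) ∂μ
      = ∫⁻ θ, ENNReal.ofReal (q θ / Z * truncHarmonicMix μ w A q θ ^ 2) ∂μ :=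
        lintegral_congr fun θ => (ENNReal.ofReal_mul (div_nonneg (hq0 θ) hZ.le)).symm
    _ ≤ ∫⁻ θ, ENNReal.ofReal (Fintype.card ι) * ∑ k, (A k).indicator (fun θ =>
          ENNReal.ofReal (Z⁻¹ ^ 2) * ENNReal.ofReal (w k ^ 2 / a k) *
            ENNReal.ofReal ((1 / (μ (A k)).toReal ^ 2) / g k θ)) θ ∂μ := by
        refine lintegral_mono fun θ => (ENNReal.ofReal_le_ofReal
          (div_mul_sq_truncHarmonicMix_le hq0 hZ hAq ha hg hdom θ)).trans_eq ?_
        rw [ENNReal.ofReal_mul (Nat.cast_nonneg _), ENNReal.ofReal_sum_of_nonneg fun k _ =>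
          Set.indicator_nonneg (fun θ _ => by have := ha k; have := hg k θ; positivity) θ]
        simp only [hterm]
    _ = _ := by
        have hmeas : ∀ k, Measurable fun θ => ENNReal.ofReal (Z⁻¹ ^ 2) *
            ENNReal.ofReal (w k ^ 2 / a k) *
              ENNReal.ofReal ((1 / (μ (A k)).toReal ^ 2) / g k θ) :=
          fun k => ((hgm k).const_div _).ennreal_ofReal.const_mul _
        rw [lintegral_const_mul' _ _ ENNReal.ofReal_ne_top,
          lintegral_finsetSum _ fun k _ => (hmeas k).indicator (hA k),
          ENNReal.ofReal_mul (Nat.cast_nonneg _), mul_assoc]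
        congr 1
        rw [Finset.mul_sum]
        refine Finset.sum_congr rfl fun k _ => ?_
        rw [lintegral_indicator (hA k), lintegral_const_mul _ ((hgm k).const_div _).ennreal_ofReal,
          mul_assoc]

end TruncatedHarmonicMix

theorem thames_mixture_gaussian_variance_upper_bound_general
    {R : ℕ} (prior L : (Fin R → ℝ) → ℝ)
    (hprior : Measurable prior) (hL : Measurable L)
    (hpriornn : ∀ θ, 0 ≤ prior θ) (hLnn : ∀ θ, 0 ≤ L θ)
    (Z : ℝ) (hZpos : 0 < Z)
    (K : ℕ)
    (a : Fin K → ℝ) (ha : ∀ k, 0 < a k)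
    (m : Fin K → Fin R → ℝ) (S : Fin K → Matrix (Fin R) (Fin R) ℝ)
    (hS : ∀ k, (S k).PosDef)
    (hmix : ∀ θ, prior θ * L θ / Z = ∑ k, a k * mvnPdf (m k) (S k) θ)
    (A : Fin K → Set (Fin R → ℝ)) (hA : ∀ k, MeasurableSet (A k))
    (hApos : ∀ k, 0 < volume (A k)) (hAfin : ∀ k, volume (A k) < ⊤)
    (hAsupp : ∀ k, A k ⊆ {θ | 0 < prior θ * L θ})
    (w : Fin K → ℝ) (hwsum : ∑ k, w k = 1)
    {Ω : Type} [MeasureSpace Ω] [IsProbabilityMeasure (ℙ : Measure Ω)]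
    (M : ℕ) (hM : 0 < M)
    (X : Fin M → Ω → (Fin R → ℝ))
    (hXmeas : ∀ t, Measurable (X t))
    (hXdist : ∀ t, Measure.map (X t) ℙ =
      volume.withDensity (fun θ => ENNReal.ofReal (prior θ * L θ / Z)))
    (hXindep : iIndepFun X ℙ) :
    evariance (fun ω => ∑ k : Fin K, w k * ((1 / (M : ℝ)) * ∑ t : Fin M,
        (A k).indicator (fun _ => (1 : ℝ)) (X t ω) /
          ((volume (A k)).toReal * (prior (X t ω) * L (X t ω))))) ℙ
      + ENNReal.ofReal (Z⁻¹ ^ 2 / M)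
    ≤ ENNReal.ofReal ((K : ℝ) * Z⁻¹ ^ 2 / M) *
        ∑ k : Fin K, ENNReal.ofReal (w k ^ 2 / a k) *
          ∫⁻ θ in A k, ENNReal.ofReal
            ((1 / (volume (A k)).toReal ^ 2) / mvnPdf (m k) (S k) θ) := by
  have hq : Measurable fun θ => prior θ * L θ := hprior.mul hL
  have hq0 : ∀ θ, 0 ≤ prior θ * L θ := fun θ => mul_nonneg (hpriornn θ) (hLnn θ)
  have hdom : ∀ k θ, a k * mvnPdf (m k) (S k) θ ≤ prior θ * L θ / Z := fun k θ =>
    hmix θ ▸ Finset.single_le_sum (fun j _ => (mul_pos (ha j) (mvnPdf_pos _ (hS j) θ)).le)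
      (Finset.mem_univ k)
  have hestimator := fun ω => sum_mul_mean_eq_mean_truncHarmonicMix (μ := volume) (w := w)
    (A := A) (q := fun θ => prior θ * L θ) (fun t => X t ω)
  have hmean := integral_truncHarmonicMix_withDensity (w := w) hq hq0 hZpos.le hA
    (fun k => (hApos k).ne') (fun k => (hAfin k).ne) hAsupp
  have hvar := evariance_sampleMean_add_sq_integral_le hM hXmeas hXdist hXindep
    (measurable_truncHarmonicMix (μ := volume) (w := w) hA hq)
  have hsecond := lintegral_sq_truncHarmonicMix_withDensity_le (μ := volume) (w := w) hq hq0
    hZpos hA hAsupp (fun k => measurable_mvnPdf _ _) ha (fun k => mvnPdf_pos _ (hS k)) hdom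
  rw [hmean, hwsum, one_div] at hvar
  rw [Fintype.card_fin] at hsecond
  simp only [hestimator]
  refine (hvar.trans (mul_le_mul_right hsecond _)).trans_eq ?_
  rw [← mul_assoc, ← ENNReal.ofReal_mul (by positivity), inv_mul_eq_div]

/-- Gaussian-mixture variance upper bound (step of Theorem 3): if the posterior density
is a Gaussian mixture `p(θ) = ∑ₖ aₖ MVN_R(θ; mₖ, Sₖ)` with `aₖ > 0` summing to `1` and
`Sₖ` positive definite, then for the convex combination `Ẑ_Mix⁻¹` of truncated harmonic
mean estimators with weights `ωₖ` and sets `Aₖ`,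
`Var[Ẑ_Mix⁻¹] ≤ (K Z⁻²/M) ∑ₖ (ωₖ²/aₖ) ∫_{Aₖ} (1/V(Aₖ)²)/MVN_R(θ; mₖ, Sₖ) dθ − Z⁻²/M`,
stated on the extended nonnegative reals with the subtracted term moved to the left. -/
theorem thames_mixture_gaussian_variance_upper_bound
    {R : ℕ} (prior L : (Fin R → ℝ) → ℝ)
    (hprior : Measurable prior) (hL : Measurable L)
    (hpriornn : ∀ θ, 0 ≤ prior θ) (hLnn : ∀ θ, 0 ≤ L θ)
    (Z : ℝ) (hZ : Z = ∫ θ, prior θ * L θ) (hZpos : 0 < Z)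
    (K : ℕ) (hK : 0 < K)
    (a : Fin K → ℝ) (ha : ∀ k, 0 < a k) (hasum : ∑ k, a k = 1)
    (m : Fin K → Fin R → ℝ) (S : Fin K → Matrix (Fin R) (Fin R) ℝ)
    (hS : ∀ k, (S k).PosDef)
    (hmix : ∀ θ, prior θ * L θ / Z = ∑ k, a k * mvnPdf (m k) (S k) θ)
    (A : Fin K → Set (Fin R → ℝ)) (hA : ∀ k, MeasurableSet (A k))
    (hApos : ∀ k, 0 < volume (A k)) (hAfin : ∀ k, volume (A k) < ⊤)
    (hAsupp : ∀ k, A k ⊆ {θ | 0 < prior θ * L θ})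
    (w : Fin K → ℝ) (hw : ∀ k, 0 ≤ w k) (hwsum : ∑ k, w k = 1)
    {Ω : Type} [MeasureSpace Ω] [IsProbabilityMeasure (ℙ : Measure Ω)]
    (M : ℕ) (hM : 0 < M)
    (X : Fin M → Ω → (Fin R → ℝ))
    (hXmeas : ∀ t, Measurable (X t))
    (hXdist : ∀ t, Measure.map (X t) ℙ =
      volume.withDensity (fun θ => ENNReal.ofReal (prior θ * L θ / Z)))
    (hXindep : iIndepFun X ℙ) :
    evariance (fun ω => ∑ k : Fin K, w k * ((1 / (M : ℝ)) * ∑ t : Fin M,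
        (A k).indicator (fun _ => (1 : ℝ)) (X t ω) /
          ((volume (A k)).toReal * (prior (X t ω) * L (X t ω))))) ℙ
      + ENNReal.ofReal (Z⁻¹ ^ 2 / M)
    ≤ ENNReal.ofReal ((K : ℝ) * Z⁻¹ ^ 2 / M) *
        ∑ k : Fin K, ENNReal.ofReal (w k ^ 2 / a k) *
          ∫⁻ θ in A k, ENNReal.ofReal
            ((1 / (volume (A k)).toReal ^ 2) / mvnPdf (m k) (S k) θ) :=
  thames_mixture_gaussian_variance_upper_bound_general prior L hprior hL hpriornn hLnn Z hZpos K a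
    ha m S hS hmix A hA hApos hAfin hAsupp w hwsum M hM X hXmeas hXdist hXindep
end
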